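/- arXiv:math-ph/0010036 — 2 statements merged into one kernel-verified Lean document; each statement's English description precedes it below -/
import Mathlib

section
/- (Lemma 3) The map Ξ: 𝔓^{n−1}M/C^{n−1}(M) → 𝔭𝔭M is a Lie algebra isomorphism: for all a,b ∈ 𝔓^{n−1}M, Ξ({a,b}) = [Ξ(a), Ξ(b)]. Moreover the Jacobi identity holds modulo exact terms: for all a,b,c ∈ 𝔓^{n−1}M, {{a,b},c} + {{b,c},a} + {{c,a},b} = d( ξ_c⌟ξ_b⌟ξ_a⌟Ω ), where ξ_a = Ξ(a), ξ_b = Ξ(b), ξ_c = Ξ(c). -/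
open scoped BigOperators
open MeasureTheory

noncomputable section

namespace Pataplectic

/-- A multi-index `μ : Fin d → Fin e` is increasing. -/
def IncP {d e : ℕ} (μ : Fin d → Fin e) : Prop := ∀ a b : Fin d, a < b → μ a < μ b

instance {d e : ℕ} : DecidablePred (@IncP d e) := fun μ => by unfold IncP; infer_instance

variable (n k : ℕ)

/-- Coordinates on `X × Y`, where `X = ℝⁿ` and `Y = ℝᵏ`. -/
abbrev E := Fin (n + k) → ℝ

/-- Increasing multi-indices of length `n`, indexing the coordinates
`p_{μ₁…μₙ}` of a point of `ΛⁿT*(X×Y)` over a point of `X×Y`. -/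
abbrev Idx := {μ : Fin n → Fin (n + k) // IncP μ}

/-- The fiber of `ΛⁿT*(X×Y)`, described by its coordinates `p_{μ₁…μₙ}`. -/
abbrev Psp := Idx n k → ℝ

/-- The pataplectic manifold `M = ΛⁿT*(X×Y)`. -/
abbrev Mfd := E n k × Psp n k

/-- Evaluation `⟨p, z₁ ∧ … ∧ zₙ⟩` of `p ∈ ΛⁿT*_q(X×Y)` on an `n`-tuple of
tangent vectors: `Σ_{μ₁<…<μₙ} p_{μ₁…μₙ} det (z_b^{μ_a})`. -/
def pApply (p : Psp n k) (z : Fin n → E n k) : ℝ :=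
  ∑ μ : Idx n k, p μ * Matrix.det (Matrix.of fun a b => z b (μ.1 a))

/-- A (raw) differential `d`-form on `M`, given by its evaluation on `d`-tuples
of tangent vectors. -/
abbrev Form (d : ℕ) := Mfd n k → (Fin d → Mfd n k) → ℝ

variable {n k}

/-- The exterior derivative of a `d`-form on `M`, via the standard formula
on constant vector fields. -/
def extD {d : ℕ} (ω : Form n k d) : Form n k (d + 1) :=
  fun x v => ∑ i : Fin (d + 1),
    (-1 : ℝ) ^ (i : ℕ) * fderiv ℝ (fun y => ω y (i.removeNth v)) x (v i)

/-- Interior product of a vector field with a `(d+1)`-form. -/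
def iota {d : ℕ} (ξ : Mfd n k → Mfd n k) (ω : Form n k (d + 1)) : Form n k d :=
  fun x v => ω x (Fin.cons (ξ x) v)

/-- A raw form is smooth if its evaluation on any fixed tuple of (constant)
tangent vectors is a smooth function on `M`. -/
def SmoothF {d : ℕ} (ω : Form n k d) : Prop := ∀ v, ContDiff ℝ (⊤ : ℕ∞) (fun x => ω x v)

variable (n k)

/-- The Poincaré–Cartan form `θ = Σ_{μ₁<…<μₙ} p_{μ₁…μₙ} dq^{μ₁}∧…∧dq^{μₙ}`. -/
def theta : Form n k n := fun m v => pApply n k m.2 (fun i => (v i).1)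

/-- The pataplectic form `Ω = dθ`. -/
def Omega : Form n k (n + 1) := extD (theta n k)

/-- The volume form `ω = dx¹∧…∧dxⁿ`, pulled back to `M`. -/
def vol : Form n k n := fun _ v => Matrix.det (Matrix.of fun a b => (v b).1 (Fin.castAdd k a))

/-- Lie bracket of two vector fields on `M`. -/
def lieB {n k : ℕ} (ξ η : Mfd n k → Mfd n k) : Mfd n k → Mfd n k :=
  fun x => fderiv ℝ η x (ξ x) - fderiv ℝ ξ x (η x)


-- ### new material

/-- The linear map sending `m ∈ M` to the row `(m.p_μ, m.q^{μ₁}, …, m.q^{μₙ})`. -/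
def rowL (μ : Idx n k) : Mfd n k →ₗ[ℝ] (Fin (n + 1) → ℝ) where
  toFun m := Fin.cons (m.2 μ) (fun j => m.1 (μ.1 j))
  map_add' m₁ m₂ := by
    funext j
    refine Fin.cases ?_ (fun l => ?_) j <;> simp
  map_smul' c m := by
    funext j
    refine Fin.cases ?_ (fun l => ?_) j <;> simp

def rowCL (μ : Idx n k) : Mfd n k →L[ℝ] (Fin (n + 1) → ℝ) :=
  LinearMap.toContinuousLinearMap (rowL n k μ)

/-- `Ω` as a continuous multilinear map. -/
def OmCM : ContinuousMultilinearMap ℝ (fun _ : Fin (n + 1) => Mfd n k) ℝ :=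
  ∑ μ : Idx n k, ∑ σ : Equiv.Perm (Fin (n + 1)),
    (((Equiv.Perm.sign σ : ℤ) : ℝ)) •
      (ContinuousMultilinearMap.mkPiAlgebraFin ℝ (n + 1) ℝ).compContinuousLinearMap
        (fun i => (ContinuousLinearMap.proj (σ i)).comp (rowCL n k μ))

lemma OmCM_apply (v : Fin (n + 1) → Mfd n k) :
    OmCM n k v = ∑ μ : Idx n k,
      Matrix.det (Matrix.of fun i j => rowL n k μ (v i) j) := by
  rw [OmCM]
  rw [ContinuousMultilinearMap.sum_apply]
  refine Finset.sum_congr rfl fun μ _ => ?_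
  rw [ContinuousMultilinearMap.sum_apply]
  rw [← Matrix.det_transpose, Matrix.det_apply']
  refine Finset.sum_congr rfl fun σ _ => ?_
  simp [ContinuousMultilinearMap.smul_apply,
    ContinuousMultilinearMap.compContinuousLinearMap_apply,
    ContinuousMultilinearMap.mkPiAlgebraFin_apply, List.prod_ofFn, rowCL,
    Matrix.transpose_apply, Fin.prod_univ_succ]

lemma OmCM_eq_zero {v : Fin (n + 1) → Mfd n k} {i j : Fin (n + 1)}
    (h : v i = v j) (hij : i ≠ j) : OmCM n k v = 0 := by
  rw [OmCM_apply]
  refine Finset.sum_eq_zero fun μ _ => ?_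
  refine Matrix.det_zero_of_row_eq hij ?_
  funext l
  simp [h]

/-- `θ(·, w)` as a linear map. -/
def thetaL (w : Fin n → Mfd n k) : Mfd n k →ₗ[ℝ] ℝ where
  toFun m := pApply n k m.2 (fun i => (w i).1)
  map_add' m₁ m₂ := by
    simp [pApply, add_mul, Finset.sum_add_distrib]
  map_smul' c m := by
    simp [pApply, Finset.mul_sum, mul_assoc]

lemma Omega_apply (x : Mfd n k) (v : Fin (n + 1) → Mfd n k) :
    Omega n k x v = ∑ i : Fin (n + 1), (-1 : ℝ) ^ (i : ℕ) *
      pApply n k ((v i).2) (fun a => ((i.removeNth v) a).1) := by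
  rw [Omega, extD]
  refine Finset.sum_congr rfl fun i _ => ?_
  congr 1
  have h1 : (fun y => theta n k y (i.removeNth v))
      = LinearMap.toContinuousLinearMap (thetaL n k (i.removeNth v)) := rfl
  rw [h1, ContinuousLinearMap.fderiv]
  rfl

lemma Omega_eq_OmCM (x : Mfd n k) (v : Fin (n + 1) → Mfd n k) :
    Omega n k x v = OmCM n k v := by
  rw [Omega_apply, OmCM_apply]
  have hdet : ∀ μ : Idx n k,
      Matrix.det (Matrix.of fun i j => rowL n k μ (v i) j)
        = ∑ i : Fin (n + 1), (-1 : ℝ) ^ (i : ℕ) * (v i).2 μ *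
            Matrix.det (Matrix.of fun a b => ((i.removeNth v) b).1 (μ.1 a)) := by
    intro μ
    rw [Matrix.det_succ_column_zero]
    refine Finset.sum_congr rfl fun i _ => ?_
    have h0 : (Matrix.of fun i j => rowL n k μ (v i) j) i 0 = (v i).2 μ := rfl
    have h1 : Matrix.det ((Matrix.of fun i j => rowL n k μ (v i) j).submatrix
          i.succAbove Fin.succ)
        = Matrix.det (Matrix.of fun a b => ((i.removeNth v) b).1 (μ.1 a)) := by
      rw [← Matrix.det_transpose (Matrix.of fun a b => ((i.removeNth v) b).1 (μ.1 a))]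
      rfl
    rw [h0, h1]
  rw [Finset.sum_congr rfl fun μ _ => hdet μ, Finset.sum_comm]
  refine Finset.sum_congr rfl fun i _ => ?_
  rw [pApply, Finset.mul_sum]
  refine Finset.sum_congr rfl fun μ _ => ?_
  ring

variable {n k}

lemma fderiv_OmCM_comp (ζ : Fin (n + 1) → (Mfd n k → Mfd n k)) (x : Mfd n k)
    (hζ : ∀ j, DifferentiableAt ℝ (ζ j) x) (h : Mfd n k) :
    fderiv ℝ (fun y => OmCM n k (fun j => ζ j y)) x h
      = ∑ j, OmCM n k (Function.update (fun j' => ζ j' x) j (fderiv ℝ (ζ j) x h)) := by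
  have hg : HasFDerivAt (fun y => (fun j => ζ j y))
      (ContinuousLinearMap.pi fun j => fderiv ℝ (ζ j) x) x := by
    rw [hasFDerivAt_pi']
    intro i
    rw [ContinuousLinearMap.proj_pi]
    exact (hζ i).hasFDerivAt
  have hc := ((OmCM n k).hasFDerivAt (fun j => ζ j x)).comp x hg
  rw [show (fun y => OmCM n k fun j => ζ j y)
      = (⇑(OmCM n k) ∘ fun y j => ζ j y) from rfl, hc.fderiv]
  simp [ContinuousMultilinearMap.linearDeriv_apply]

lemma OmCM_update_swap (m : Fin (n + 1) → Mfd n k) {i j : Fin (n + 1)} (hij : i ≠ j)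
    (A B : Mfd n k) :
    OmCM n k (Function.update (Function.update m i A) j B)
      = - OmCM n k (Function.update (Function.update m i B) j A) := by
  have hval : ∀ X Y : Mfd n k,
      Function.update (Function.update m i X) j Y i = X := fun X Y => by
    rw [Function.update_of_ne hij, Function.update_self]
  have hdiag : ∀ X : Mfd n k,
      OmCM n k (Function.update (Function.update m i X) j X) = 0 := fun X =>
    OmCM_eq_zero n k (by rw [hval, Function.update_self]) hij
  have key : OmCM n k (Function.update (Function.update m i (A + B)) j (A + B)) = 0 :=
    hdiag _
  have e1 : ∀ Y : Mfd n k,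
      OmCM n k (Function.update (Function.update m i (A + B)) j Y)
        = OmCM n k (Function.update (Function.update m i A) j Y)
          + OmCM n k (Function.update (Function.update m i B) j Y) := by
    intro Y
    rw [Function.update_comm hij (A + B) Y m, (OmCM n k).map_update_add,
      Function.update_comm hij.symm Y A m, Function.update_comm hij.symm Y B m]
  rw [(OmCM n k).map_update_add, e1, e1, hdiag, hdiag] at key
  linarith [key]

lemma OmCM_cons_sub {m : ℕ} (A B : Mfd m k) (s : Fin m → Mfd m k) :
    OmCM m k (Fin.cons (A - B) s) = OmCM m k (Fin.cons A s) - OmCM m k (Fin.cons B s) := by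
  have h : A - B = A + (-1 : ℝ) • B := by rw [neg_one_smul, sub_eq_add_neg]
  rw [h, (OmCM m k).cons_add, (OmCM m k).cons_smul]
  rw [neg_one_smul]
  ring

lemma OmCM_swap01 {m : ℕ} (A B : Mfd (m + 1) k) (w : Fin m → Mfd (m + 1) k) :
    OmCM (m + 1) k (Fin.cons A (Fin.cons B w))
      = - OmCM (m + 1) k (Fin.cons B (Fin.cons A w)) := by
  have h01 : (0 : Fin (m + 2)) ≠ 1 := by simp
  have hL : Fin.cons A (Fin.cons B w)
      = Function.update (Function.update
          (Fin.cons A (Fin.cons B w) : Fin (m + 2) → Mfd (m + 1) k) (0 : Fin (m + 2)) A)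
          (1 : Fin (m + 2)) B := by
    rw [Fin.update_cons_zero, ← Fin.succ_zero_eq_one, ← Fin.cons_update, Fin.update_cons_zero]
  have hR : Function.update (Function.update
        (Fin.cons A (Fin.cons B w) : Fin (m + 2) → Mfd (m + 1) k) (0 : Fin (m + 2)) B)
        (1 : Fin (m + 2)) A
      = Fin.cons B (Fin.cons A w) := by
    rw [Fin.update_cons_zero, ← Fin.succ_zero_eq_one, ← Fin.cons_update, Fin.update_cons_zero]
  rw [hL, OmCM_update_swap _ h01, hR]

lemma OmCM_swap12 {m : ℕ} (A B C : Mfd (m + 2) k) (w : Fin m → Mfd (m + 2) k) :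
    OmCM (m + 2) k (Fin.cons A (Fin.cons B (Fin.cons C w)))
      = - OmCM (m + 2) k (Fin.cons A (Fin.cons C (Fin.cons B w))) := by
  have h12 : (1 : Fin (m + 3)) ≠ 2 := Fin.ne_of_val_ne (by simp [Nat.mod_eq_of_lt (show 2 < m + 3 by omega)])
  have hL : Fin.cons A (Fin.cons B (Fin.cons C w))
      = Function.update (Function.update
          (Fin.cons A (Fin.cons B (Fin.cons C w)) : Fin (m + 3) → Mfd (m + 2) k)
          (1 : Fin (m + 3)) B) (2 : Fin (m + 3)) C := by
    rw [← Fin.succ_zero_eq_one, ← Fin.cons_update, Fin.update_cons_zero,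
      ← Fin.succ_one_eq_two, ← Fin.cons_update, ← Fin.succ_zero_eq_one, ← Fin.cons_update,
      Fin.update_cons_zero]
  have hR : Function.update (Function.update
        (Fin.cons A (Fin.cons B (Fin.cons C w)) : Fin (m + 3) → Mfd (m + 2) k)
        (1 : Fin (m + 3)) C) (2 : Fin (m + 3)) B
      = Fin.cons A (Fin.cons C (Fin.cons B w)) := by
    rw [← Fin.succ_zero_eq_one, ← Fin.cons_update, Fin.update_cons_zero,
      ← Fin.succ_one_eq_two, ← Fin.cons_update, ← Fin.succ_zero_eq_one, ← Fin.cons_update,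
      Fin.update_cons_zero]
  rw [hL, OmCM_update_swap _ h12, hR]

lemma val_succAbove {d : ℕ} (i : Fin (d + 1)) (j : Fin d) :
    ((i.succAbove j : Fin (d + 1)) : ℕ) = if (j : ℕ) < (i : ℕ) then (j : ℕ) else (j : ℕ) + 1 := by
  rcases lt_or_ge ((j : ℕ)) ((i : ℕ)) with h | h
  · rw [if_pos h, Fin.succAbove_of_castSucc_lt _ _ (by rwa [Fin.lt_def])]
    rfl
  · rw [if_neg (not_lt.2 h), Fin.succAbove_of_le_castSucc _ _ (by rwa [Fin.le_def])]
    rfl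

/-- The partner index: if `m = i.succAbove j` then `m.succAbove (pt i j) = i`. -/
def pt {d : ℕ} (i : Fin (d + 2)) (j : Fin (d + 1)) : Fin (d + 1) :=
  if h : (j : ℕ) < (i : ℕ) then ⟨(i : ℕ) - 1, by have := i.isLt; omega⟩
  else ⟨(i : ℕ), by have := j.isLt; omega⟩

lemma val_pt {d : ℕ} (i : Fin (d + 2)) (j : Fin (d + 1)) :
    ((pt i j : Fin (d + 1)) : ℕ) = if (j : ℕ) < (i : ℕ) then (i : ℕ) - 1 else (i : ℕ) := by
  unfold pt
  split_ifs <;> rfl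

lemma pt_succAbove {d : ℕ} (i : Fin (d + 2)) (j : Fin (d + 1)) :
    (i.succAbove j).succAbove (pt i j) = i := by
  apply Fin.ext
  rw [val_succAbove, val_pt, val_succAbove]
  split_ifs <;> omega

lemma pt_pt {d : ℕ} (i : Fin (d + 2)) (j : Fin (d + 1)) :
    pt (i.succAbove j) (pt i j) = j := by
  apply Fin.ext
  rw [val_pt, val_pt, val_succAbove]
  split_ifs <;> omega

lemma neg_one_pow_pt {d : ℕ} (i : Fin (d + 2)) (j : Fin (d + 1)) :
    (-1 : ℝ) ^ (((i.succAbove j : Fin (d + 2)) : ℕ) + ((pt i j : Fin (d + 1)) : ℕ))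
      = -(-1 : ℝ) ^ ((i : ℕ) + (j : ℕ)) := by
  have key : ((i.succAbove j : Fin (d + 2)) : ℕ) + ((pt i j : Fin (d + 1)) : ℕ) + 1
        = (i : ℕ) + (j : ℕ)
      ∨ (i : ℕ) + (j : ℕ) + 1
        = ((i.succAbove j : Fin (d + 2)) : ℕ) + ((pt i j : Fin (d + 1)) : ℕ) := by
    rw [val_succAbove, val_pt]
    split_ifs <;> omega
  rcases key with h3 | h3
  · rw [← h3, pow_succ]
    ring
  · rw [← h3, pow_succ]
    ring

lemma range_succAbove_comp {d : ℕ} (i : Fin (d + 2)) (j : Fin (d + 1)) :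
    Set.range (i.succAbove ∘ j.succAbove) = ({i, i.succAbove j} : Set (Fin (d + 2)))ᶜ := by
  ext x
  simp only [Set.mem_range, Function.comp_apply, Set.mem_compl_iff, Set.mem_insert_iff,
    Set.mem_singleton_iff, not_or]
  constructor
  · rintro ⟨l, rfl⟩
    exact ⟨Fin.succAbove_ne _ _,
      fun h => Fin.succAbove_ne j l (Fin.succAbove_right_injective h)⟩
  · rintro ⟨h1, h2⟩
    obtain ⟨y, rfl⟩ := Fin.exists_succAbove_eq h1
    obtain ⟨l, rfl⟩ := Fin.exists_succAbove_eq (show y ≠ j from fun hy => h2 (by rw [hy]))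
    exact ⟨l, rfl⟩

lemma succAbove_pt_comm {d : ℕ} (i : Fin (d + 2)) (j : Fin (d + 1)) :
    (i.succAbove j).succAbove ∘ (pt i j).succAbove = i.succAbove ∘ j.succAbove := by
  refine (StrictMono.range_inj ?_ ?_).1 ?_
  · exact (Fin.strictMono_succAbove _).comp (Fin.strictMono_succAbove _)
  · exact (Fin.strictMono_succAbove _).comp (Fin.strictMono_succAbove _)
  · rw [range_succAbove_comp, range_succAbove_comp, pt_succAbove, Set.pair_comm]

lemma removeNth_pt {d : ℕ} (i : Fin (d + 2)) (j : Fin (d + 1)) (v : Fin (d + 2) → Mfd n k) :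
    Fin.removeNth (pt i j) (Fin.removeNth (i.succAbove j) v)
      = Fin.removeNth j (Fin.removeNth i v) := by
  funext l
  show v ((i.succAbove j).succAbove ((pt i j).succAbove l)) = v (i.succAbove (j.succAbove l))
  rw [show (i.succAbove j).succAbove ((pt i j).succAbove l) = i.succAbove (j.succAbove l)
    from congrFun (succAbove_pt_comm i j) l]

lemma extD_extD {d : ℕ} (a : Form n k d) (ha : SmoothF a) (x : Mfd n k)
    (v : Fin (d + 2) → Mfd n k) : extD (extD a) x v = 0 := by
  classical
  have hsm : ∀ w : Fin d → Mfd n k, ContDiff ℝ (⊤ : ℕ∞) (fun z => a z w) := ha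
  have hdf : ∀ w : Fin d → Mfd n k, ContDiff ℝ (⊤ : ℕ∞) (fderiv ℝ (fun z => a z w)) :=
    fun w => (hsm w).fderiv_right (by simp)
  have hdiff1 : ∀ (w : Fin d → Mfd n k) (c : Mfd n k),
      DifferentiableAt ℝ (fun y => fderiv ℝ (fun z => a z w) y c) x :=
    fun w c => (((hdf w).differentiable (by simp)) x).clm_apply (differentiableAt_const c)
  have hsymm : ∀ (w : Fin d → Mfd n k) (p q : Mfd n k),
      fderiv ℝ (fderiv ℝ (fun z => a z w)) x p q
        = fderiv ℝ (fderiv ℝ (fun z => a z w)) x q p := by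
    intro w p q
    exact second_derivative_symmetric
      (fun y => (((hsm w).differentiable (by simp)) y).hasFDerivAt)
      ((((hdf w).differentiable (by simp)) x).hasFDerivAt) p q
  have hinner : ∀ i : Fin (d + 2),
      fderiv ℝ (fun y => extD a y (i.removeNth v)) x (v i)
        = ∑ j : Fin (d + 1), (-1 : ℝ) ^ (j : ℕ) *
            fderiv ℝ (fderiv ℝ (fun z => a z (Fin.removeNth j (Fin.removeNth i v)))) x (v i)
              ((i.removeNth v) j) := by
    intro i
    have h1 : (fun y => extD a y (i.removeNth v))
        = fun y => ∑ j : Fin (d + 1), (-1 : ℝ) ^ (j : ℕ) *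
            fderiv ℝ (fun z => a z (Fin.removeNth j (Fin.removeNth i v))) y
              ((i.removeNth v) j) := rfl
    rw [h1, fderiv_fun_sum (fun j _ => ((hdiff1 _ _).const_mul _)),
      ContinuousLinearMap.sum_apply]
    refine Finset.sum_congr rfl fun j _ => ?_
    rw [fderiv_const_mul (hdiff1 _ _), ContinuousLinearMap.smul_apply, smul_eq_mul]
    congr 1
    rw [fderiv_clm_apply (((hdf _).differentiable (by simp)) x) (differentiableAt_const _)]
    simp
  have hexp : extD (extD a) x v
      = ∑ p : Fin (d + 2) × Fin (d + 1), (-1 : ℝ) ^ ((p.1 : ℕ) + (p.2 : ℕ)) *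
          fderiv ℝ (fderiv ℝ (fun z => a z (Fin.removeNth p.2 (Fin.removeNth p.1 v)))) x
            (v p.1) (v (p.1.succAbove p.2)) := by
    rw [show extD (extD a) x v = ∑ i : Fin (d + 2), (-1 : ℝ) ^ (i : ℕ) *
        fderiv ℝ (fun y => extD a y (i.removeNth v)) x (v i) from rfl]
    rw [Fintype.sum_prod_type]
    refine Finset.sum_congr rfl fun i _ => ?_
    rw [hinner i, Finset.mul_sum]
    refine Finset.sum_congr rfl fun j _ => ?_
    rw [pow_add, mul_assoc]
    rfl
  rw [hexp]
  refine Finset.sum_involution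
    (fun p _ => (p.1.succAbove p.2, pt p.1 p.2)) ?_ ?_ (fun p _ => Finset.mem_univ _) ?_
  · rintro ⟨i, j⟩ -
    dsimp only
    rw [neg_one_pow_pt, removeNth_pt, pt_succAbove, hsymm]
    ring
  · rintro ⟨i, j⟩ - -
    intro hEq
    exact Fin.succAbove_ne i j (congrArg Prod.fst hEq)
  · rintro ⟨i, j⟩ -
    dsimp only
    rw [pt_succAbove, pt_pt]

lemma removeNth_cons_succ {α : Type*} {m : ℕ} (t : α) (v : Fin (m + 1) → α) (i : Fin (m + 1)) :
    @Fin.removeNth (m + 1) (fun _ => α) (Fin.succ i) (Fin.cons t v)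
      = Fin.cons t (@Fin.removeNth m (fun _ => α) i v) := by
  funext l
  refine Fin.cases ?_ (fun l' => ?_) l
  · show (Fin.cons t v : Fin (m + 2) → α) ((Fin.succ i).succAbove 0) = t
    rw [Fin.succ_succAbove_zero, Fin.cons_zero]
  · show (Fin.cons t v : Fin (m + 2) → α) ((Fin.succ i).succAbove (Fin.succ l'))
        = (Fin.cons t (Fin.removeNth i v) : Fin (m + 1) → α) (Fin.succ l')
    rw [Fin.succ_succAbove_succ, Fin.cons_succ, Fin.cons_succ]
    rfl

lemma cons_fun_apply {α β : Type*} {m : ℕ} (f : α → β) (g : Fin m → α → β) (x : α) :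
    (fun j : Fin (m + 1) => (Fin.cons f g : Fin (m + 1) → α → β) j x)
      = Fin.cons (f x) (fun l => g l x) := by
  funext j
  refine Fin.cases ?_ (fun l => ?_) j
  · rfl
  · rw [Fin.cons_succ, Fin.cons_succ]

lemma fderiv_iota1 (ξ : Mfd n k → Mfd n k) (hξ : ContDiff ℝ (⊤ : ℕ∞) ξ)
    (w : Fin n → Mfd n k) (x h : Mfd n k) :
    fderiv ℝ (fun y => OmCM n k (Fin.cons (ξ y) w)) x h
      = OmCM n k (Fin.cons (fderiv ℝ ξ x h) w) := by
  classical
  set ζ : Fin (n + 1) → (Mfd n k → Mfd n k) :=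
    Fin.cons ξ (fun l => Function.const _ (w l)) with hζdef
  have hζ : ∀ j, DifferentiableAt ℝ (ζ j) x := fun j => by
    refine Fin.cases ?_ (fun l => ?_) j
    · exact (hξ.differentiable (by simp)).differentiableAt
    · rw [hζdef, Fin.cons_succ]
      exact differentiableAt_const _
  have happ : ∀ y, (fun j => ζ j y) = Fin.cons (ξ y) w := by
    intro y
    rw [hζdef, cons_fun_apply]
    rfl
  have h1 : (fun y => OmCM n k (Fin.cons (ξ y) w))
      = fun y => OmCM n k (fun j => ζ j y) := by
    funext y
    rw [happ]
  rw [h1, fderiv_OmCM_comp ζ x hζ h, Fin.sum_univ_succ]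
  have hz : ∀ l : Fin n,
      OmCM n k (Function.update (fun j' => ζ j' x) (Fin.succ l) (fderiv ℝ (ζ (Fin.succ l)) x h))
        = 0 := by
    intro l
    have hzero : fderiv ℝ (ζ (Fin.succ l)) x = 0 := by
      have hc : ζ (Fin.succ l) = fun _ => w l := by
        rw [hζdef, Fin.cons_succ]
        rfl
      rw [hc]
      exact fderiv_const_apply _
    rw [hzero, ContinuousLinearMap.zero_apply]
    exact (OmCM n k).map_coord_zero (Fin.succ l) (Function.update_self _ _ _)
  rw [Finset.sum_eq_zero (fun l _ => hz l), add_zero]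
  congr 1
  rw [happ, show ζ 0 = ξ from rfl, Fin.update_cons_zero]

lemma fderiv_iota2 {m : ℕ} (ξa ξb : Mfd (m + 1) k → Mfd (m + 1) k)
    (hξa : ContDiff ℝ (⊤ : ℕ∞) ξa) (hξb : ContDiff ℝ (⊤ : ℕ∞) ξb)
    (w : Fin m → Mfd (m + 1) k) (x h : Mfd (m + 1) k) :
    fderiv ℝ (fun y => OmCM (m + 1) k (Fin.cons (ξa y) (Fin.cons (ξb y) w))) x h
      = OmCM (m + 1) k (Fin.cons (fderiv ℝ ξa x h) (Fin.cons (ξb x) w))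
        + OmCM (m + 1) k (Fin.cons (ξa x) (Fin.cons (fderiv ℝ ξb x h) w)) := by
  classical
  set ζ : Fin (m + 2) → (Mfd (m + 1) k → Mfd (m + 1) k) :=
    Fin.cons ξa (Fin.cons ξb (fun l => Function.const _ (w l))) with hζdef
  have hζ : ∀ j, DifferentiableAt ℝ (ζ j) x := fun j => by
    refine Fin.cases ?_ (fun l => ?_) j
    · exact (hξa.differentiable (by simp)).differentiableAt
    · rw [hζdef, Fin.cons_succ]
      refine Fin.cases ?_ (fun l' => ?_) l
      · exact (hξb.differentiable (by simp)).differentiableAt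
      · rw [Fin.cons_succ]
        exact differentiableAt_const _
  have happ : ∀ y, (fun j => ζ j y) = Fin.cons (ξa y) (Fin.cons (ξb y) w) := by
    intro y
    rw [hζdef, cons_fun_apply, cons_fun_apply]
    rfl
  have h1 : (fun y => OmCM (m + 1) k (Fin.cons (ξa y) (Fin.cons (ξb y) w)))
      = fun y => OmCM (m + 1) k (fun j => ζ j y) := by
    funext y
    rw [happ]
  rw [h1, fderiv_OmCM_comp ζ x hζ h, Fin.sum_univ_succ, Fin.sum_univ_succ]
  have hz : ∀ l : Fin m,
      OmCM (m + 1) k (Function.update (fun j' => ζ j' x) (Fin.succ (Fin.succ l))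
        (fderiv ℝ (ζ (Fin.succ (Fin.succ l))) x h)) = 0 := by
    intro l
    have hzero : fderiv ℝ (ζ (Fin.succ (Fin.succ l))) x = 0 := by
      have hc : ζ (Fin.succ (Fin.succ l)) = fun _ => w l := by
        rw [hζdef, Fin.cons_succ, Fin.cons_succ]
        rfl
      rw [hc]
      exact fderiv_const_apply _
    rw [hzero, ContinuousLinearMap.zero_apply]
    exact (OmCM (m + 1) k).map_coord_zero (Fin.succ (Fin.succ l)) (Function.update_self _ _ _)
  rw [Finset.sum_eq_zero (fun l _ => hz l), add_zero]
  congr 1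
  · rw [happ, show ζ 0 = ξa from rfl, Fin.update_cons_zero]
  · rw [happ, show ζ (Fin.succ 0) = ξb by rw [hζdef, Fin.cons_succ]; rfl,
      ← Fin.cons_update, Fin.update_cons_zero]

lemma fderiv_iota3 {m : ℕ} (ξa ξb ξc : Mfd (m + 2) k → Mfd (m + 2) k)
    (hξa : ContDiff ℝ (⊤ : ℕ∞) ξa) (hξb : ContDiff ℝ (⊤ : ℕ∞) ξb) (hξc : ContDiff ℝ (⊤ : ℕ∞) ξc)
    (w : Fin m → Mfd (m + 2) k) (x h : Mfd (m + 2) k) :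
    fderiv ℝ (fun y => OmCM (m + 2) k
        (Fin.cons (ξa y) (Fin.cons (ξb y) (Fin.cons (ξc y) w)))) x h
      = OmCM (m + 2) k (Fin.cons (fderiv ℝ ξa x h) (Fin.cons (ξb x) (Fin.cons (ξc x) w)))
        + OmCM (m + 2) k (Fin.cons (ξa x) (Fin.cons (fderiv ℝ ξb x h) (Fin.cons (ξc x) w)))
        + OmCM (m + 2) k (Fin.cons (ξa x) (Fin.cons (ξb x) (Fin.cons (fderiv ℝ ξc x h) w))) := by
  classical
  set ζ : Fin (m + 3) → (Mfd (m + 2) k → Mfd (m + 2) k) :=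
    Fin.cons ξa (Fin.cons ξb (Fin.cons ξc (fun l => Function.const _ (w l)))) with hζdef
  have hζ : ∀ j, DifferentiableAt ℝ (ζ j) x := fun j => by
    refine Fin.cases ?_ (fun l => ?_) j
    · exact (hξa.differentiable (by simp)).differentiableAt
    · rw [hζdef, Fin.cons_succ]
      refine Fin.cases ?_ (fun l' => ?_) l
      · exact (hξb.differentiable (by simp)).differentiableAt
      · rw [Fin.cons_succ]
        refine Fin.cases ?_ (fun l'' => ?_) l'
        · exact (hξc.differentiable (by simp)).differentiableAt
        · rw [Fin.cons_succ]
          exact differentiableAt_const _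
  have happ : ∀ y, (fun j => ζ j y)
      = Fin.cons (ξa y) (Fin.cons (ξb y) (Fin.cons (ξc y) w)) := by
    intro y
    rw [hζdef, cons_fun_apply, cons_fun_apply, cons_fun_apply]
    rfl
  have h1 : (fun y => OmCM (m + 2) k (Fin.cons (ξa y) (Fin.cons (ξb y) (Fin.cons (ξc y) w))))
      = fun y => OmCM (m + 2) k (fun j => ζ j y) := by
    funext y
    rw [happ]
  rw [h1, fderiv_OmCM_comp ζ x hζ h, Fin.sum_univ_succ, Fin.sum_univ_succ, Fin.sum_univ_succ]
  have hz : ∀ l : Fin m,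
      OmCM (m + 2) k (Function.update (fun j' => ζ j' x) (Fin.succ (Fin.succ (Fin.succ l)))
        (fderiv ℝ (ζ (Fin.succ (Fin.succ (Fin.succ l)))) x h)) = 0 := by
    intro l
    have hzero : fderiv ℝ (ζ (Fin.succ (Fin.succ (Fin.succ l)))) x = 0 := by
      have hc : ζ (Fin.succ (Fin.succ (Fin.succ l))) = fun _ => w l := by
        rw [hζdef, Fin.cons_succ, Fin.cons_succ, Fin.cons_succ]
        rfl
      rw [hc]
      exact fderiv_const_apply _
    rw [hzero, ContinuousLinearMap.zero_apply]
    exact (OmCM (m + 2) k).map_coord_zero (Fin.succ (Fin.succ (Fin.succ l)))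
      (Function.update_self _ _ _)
  rw [Finset.sum_eq_zero (fun l _ => hz l), add_zero, ← add_assoc]
  congr 1
  congr 1
  · rw [happ, show ζ 0 = ξa from rfl, Fin.update_cons_zero]
  · rw [happ, show ζ (Fin.succ 0) = ξb by rw [hζdef, Fin.cons_succ]; rfl,
      ← Fin.cons_update, Fin.update_cons_zero]
  · rw [happ, show ζ (Fin.succ (Fin.succ 0)) = ξc by
        rw [hζdef, Fin.cons_succ, Fin.cons_succ]; rfl,
      ← Fin.cons_update, ← Fin.cons_update, Fin.update_cons_zero]

lemma key_sum {m : ℕ} (a : Form (m + 1) k m) (ha : SmoothF a)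
    (ξ : Mfd (m + 1) k → Mfd (m + 1) k) (hξ : ContDiff ℝ (⊤ : ℕ∞) ξ)
    (hda : ∀ (x : Mfd (m + 1) k) (v : Fin (m + 1) → Mfd (m + 1) k),
      extD a x v = - iota ξ (Omega (m + 1) k) x v)
    (x : Mfd (m + 1) k) (u : Fin (m + 2) → Mfd (m + 1) k) :
    ∑ i : Fin (m + 2), (-1 : ℝ) ^ (i : ℕ) *
      OmCM (m + 1) k (Fin.cons (fderiv ℝ ξ x (u i)) (i.removeNth u)) = 0 := by
  have hfun : extD a = fun y w => - iota ξ (Omega (m + 1) k) y w := by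
    funext y w
    exact hda y w
  have h0 := extD_extD a ha x u
  rw [hfun] at h0
  have h1 : ∑ i : Fin (m + 2), (-1 : ℝ) ^ (i : ℕ) *
      fderiv ℝ (fun y => -(iota ξ (Omega (m + 1) k) y (i.removeNth u))) x (u i) = 0 := h0
  have hterm : ∀ i : Fin (m + 2),
      fderiv ℝ (fun y => -(iota ξ (Omega (m + 1) k) y (i.removeNth u))) x (u i)
        = - OmCM (m + 1) k (Fin.cons (fderiv ℝ ξ x (u i)) (i.removeNth u)) := by
    intro i
    have he : (fun y => -(iota ξ (Omega (m + 1) k) y (i.removeNth u)))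
        = fun y => -(OmCM (m + 1) k (Fin.cons (ξ y) (i.removeNth u))) := by
      funext y
      rw [iota, Omega_eq_OmCM]
    rw [he, fderiv_fun_neg, ContinuousLinearMap.neg_apply, fderiv_iota1 ξ hξ]
  simp only [hterm, mul_neg] at h1
  rw [Finset.sum_neg_distrib, neg_eq_zero] at h1
  exact h1

lemma star_cons {m : ℕ} (a : Form (m + 1) k m) (ha : SmoothF a)
    (ξ : Mfd (m + 1) k → Mfd (m + 1) k) (hξ : ContDiff ℝ (⊤ : ℕ∞) ξ)
    (hda : ∀ (x : Mfd (m + 1) k) (v : Fin (m + 1) → Mfd (m + 1) k),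
      extD a x v = - iota ξ (Omega (m + 1) k) x v)
    (x t : Mfd (m + 1) k) (v : Fin (m + 1) → Mfd (m + 1) k) :
    ∑ i : Fin (m + 1), (-1 : ℝ) ^ (i : ℕ) *
      OmCM (m + 1) k (Fin.cons (fderiv ℝ ξ x (v i)) (Fin.cons t (i.removeNth v)))
      = OmCM (m + 1) k (Fin.cons (fderiv ℝ ξ x t) v) := by
  have h := key_sum a ha ξ hξ hda x (Fin.cons t v)
  rw [Fin.sum_univ_succ] at h
  simp only [Fin.cons_zero, Fin.cons_succ, Fin.val_zero, Fin.val_succ, pow_zero, one_mul,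
    removeNth_cons_succ, Fin.removeNth_zero, Fin.tail_cons, pow_succ, mul_neg, mul_one,
    neg_mul] at h
  rw [Finset.sum_neg_distrib] at h
  linarith [h]

lemma star_cons2 {m : ℕ} (a : Form (m + 2) k (m + 1)) (ha : SmoothF a)
    (ξ : Mfd (m + 2) k → Mfd (m + 2) k) (hξ : ContDiff ℝ (⊤ : ℕ∞) ξ)
    (hda : ∀ (x : Mfd (m + 2) k) (v : Fin (m + 2) → Mfd (m + 2) k),
      extD a x v = - iota ξ (Omega (m + 2) k) x v)
    (x t s : Mfd (m + 2) k) (v : Fin (m + 1) → Mfd (m + 2) k) :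
    ∑ i : Fin (m + 1), (-1 : ℝ) ^ (i : ℕ) *
      OmCM (m + 2) k (Fin.cons (fderiv ℝ ξ x (v i))
        (Fin.cons t (Fin.cons s (i.removeNth v))))
      = OmCM (m + 2) k (Fin.cons (fderiv ℝ ξ x s) (Fin.cons t v))
        - OmCM (m + 2) k (Fin.cons (fderiv ℝ ξ x t) (Fin.cons s v)) := by
  have h := key_sum a ha ξ hξ hda x (Fin.cons t (Fin.cons s v))
  rw [Fin.sum_univ_succ, Fin.sum_univ_succ] at h
  simp only [Fin.cons_zero, Fin.cons_succ, Fin.val_zero, Fin.val_succ, pow_zero, one_mul,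
    removeNth_cons_succ, Fin.removeNth_zero, Fin.tail_cons, pow_succ, mul_neg, mul_one,
    neg_mul, neg_neg] at h
  linarith [h]

/-- (Lemma 3.) The map `Ξ : 𝔓^{n-1}M/C^{n-1}(M) → 𝔭𝔭M` is a Lie algebra morphism:
for `a, b ∈ 𝔓^{n-1}M`, `Ξ({a,b}) = [Ξ(a), Ξ(b)]`, i.e. the Lie bracket `[ξ_a, ξ_b]` is
a pataplectic vector field for the 𝔭-bracket `{a,b} = ξ_b ⌟ ξ_a ⌟ Ω`; moreover the
Jacobi identity holds modulo exact terms: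
`{{a,b},c} + {{b,c},a} + {{c,a},b} = d(ξ_c ⌟ ξ_b ⌟ ξ_a ⌟ Ω)`.
(Here the dimension of `X` is `n + 2`, so that `(n-1)`-forms on `M` have degree `n+1`.) -/
theorem pBracket_lie_algebra_iso
    (n k : ℕ)
    (a b c : Form (n + 2) k (n + 1))
    (ha : SmoothF a) (hb : SmoothF b) (hc : SmoothF c)
    (ξa ξb ξc : Mfd (n + 2) k → Mfd (n + 2) k)
    (hξa : ContDiff ℝ (⊤ : ℕ∞) ξa) (hξb : ContDiff ℝ (⊤ : ℕ∞) ξb) (hξc : ContDiff ℝ (⊤ : ℕ∞) ξc)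
    (hda : ∀ (x : Mfd (n + 2) k) (v : Fin (n + 2) → Mfd (n + 2) k),
      extD a x v = - iota ξa (Omega (n + 2) k) x v)
    (hdb : ∀ (x : Mfd (n + 2) k) (v : Fin (n + 2) → Mfd (n + 2) k),
      extD b x v = - iota ξb (Omega (n + 2) k) x v)
    (hdc : ∀ (x : Mfd (n + 2) k) (v : Fin (n + 2) → Mfd (n + 2) k),
      extD c x v = - iota ξc (Omega (n + 2) k) x v) :
    -- `Ξ({a,b}) = [Ξ(a), Ξ(b)]`:
    (∀ (x : Mfd (n + 2) k) (v : Fin (n + 2) → Mfd (n + 2) k),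
      extD (iota ξb (iota ξa (Omega (n + 2) k))) x v
        = - iota (lieB ξa ξb) (Omega (n + 2) k) x v)
    ∧
    -- Jacobi identity modulo exact terms:
    (∀ (x : Mfd (n + 2) k) (v : Fin (n + 1) → Mfd (n + 2) k),
      iota ξc (iota (lieB ξa ξb) (Omega (n + 2) k)) x v
        + iota ξa (iota (lieB ξb ξc) (Omega (n + 2) k)) x v
        + iota ξb (iota (lieB ξc ξa) (Omega (n + 2) k)) x v
        = extD (iota ξc (iota ξb (iota ξa (Omega (n + 2) k)))) x v) := by
  constructor
  · -- Part 1: Ξ({a,b}) = [Ξ(a),Ξ(b)]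
    intro x v
    have hterm : ∀ i : Fin (n + 2),
        fderiv ℝ (fun y => iota ξb (iota ξa (Omega (n + 2) k)) y (i.removeNth v)) x (v i)
          = OmCM (n + 2) k (Fin.cons (fderiv ℝ ξa x (v i))
              (Fin.cons (ξb x) (i.removeNth v)))
            + OmCM (n + 2) k (Fin.cons (ξa x)
              (Fin.cons (fderiv ℝ ξb x (v i)) (i.removeNth v))) := by
      intro i
      have he : (fun y => iota ξb (iota ξa (Omega (n + 2) k)) y (i.removeNth v))
          = fun y => OmCM (n + 2) k (Fin.cons (ξa y) (Fin.cons (ξb y) (i.removeNth v))) := by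
        funext y
        exact Omega_eq_OmCM (n + 2) k y _
      rw [he, fderiv_iota2 ξa ξb hξa hξb]
    have hL : extD (iota ξb (iota ξa (Omega (n + 2) k))) x v
        = (∑ i : Fin (n + 2), (-1 : ℝ) ^ (i : ℕ) *
            OmCM (n + 2) k (Fin.cons (fderiv ℝ ξa x (v i))
              (Fin.cons (ξb x) (i.removeNth v))))
          + ∑ i : Fin (n + 2), (-1 : ℝ) ^ (i : ℕ) *
            OmCM (n + 2) k (Fin.cons (ξa x)
              (Fin.cons (fderiv ℝ ξb x (v i)) (i.removeNth v))) := by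
      rw [show extD (iota ξb (iota ξa (Omega (n + 2) k))) x v
          = ∑ i : Fin (n + 2), (-1 : ℝ) ^ (i : ℕ) *
              fderiv ℝ (fun y => iota ξb (iota ξa (Omega (n + 2) k)) y (i.removeNth v)) x (v i)
        from rfl]
      rw [← Finset.sum_add_distrib]
      refine Finset.sum_congr rfl fun i _ => ?_
      rw [hterm i]
      ring
    have hsum2 : ∑ i : Fin (n + 2), (-1 : ℝ) ^ (i : ℕ) *
        OmCM (n + 2) k (Fin.cons (ξa x) (Fin.cons (fderiv ℝ ξb x (v i)) (i.removeNth v)))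
        = - OmCM (n + 2) k (Fin.cons (fderiv ℝ ξb x (ξa x)) v) := by
      have hswap : ∀ i : Fin (n + 2),
          OmCM (n + 2) k (Fin.cons (ξa x) (Fin.cons (fderiv ℝ ξb x (v i)) (i.removeNth v)))
            = - OmCM (n + 2) k (Fin.cons (fderiv ℝ ξb x (v i))
                (Fin.cons (ξa x) (i.removeNth v))) := fun i => OmCM_swap01 _ _ _
      simp only [hswap, mul_neg]
      rw [Finset.sum_neg_distrib, star_cons b hb ξb hξb hdb x (ξa x) v]
    have hR : - iota (lieB ξa ξb) (Omega (n + 2) k) x v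
        = OmCM (n + 2) k (Fin.cons (fderiv ℝ ξa x (ξb x)) v)
          - OmCM (n + 2) k (Fin.cons (fderiv ℝ ξb x (ξa x)) v) := by
      rw [show iota (lieB ξa ξb) (Omega (n + 2) k) x v
          = Omega (n + 2) k x (Fin.cons (fderiv ℝ ξb x (ξa x) - fderiv ℝ ξa x (ξb x)) v)
        from rfl]
      rw [Omega_eq_OmCM, OmCM_cons_sub]
      ring
    rw [hL, hsum2, star_cons a ha ξa hξa hda x (ξb x) v, hR]
    ring
  · -- Part 2: Jacobi identity modulo exact terms
    intro x v
    have hterm : ∀ i : Fin (n + 1),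
        fderiv ℝ (fun y => iota ξc (iota ξb (iota ξa (Omega (n + 2) k))) y (i.removeNth v))
            x (v i)
          = OmCM (n + 2) k (Fin.cons (fderiv ℝ ξa x (v i))
              (Fin.cons (ξb x) (Fin.cons (ξc x) (i.removeNth v))))
            + OmCM (n + 2) k (Fin.cons (ξa x)
              (Fin.cons (fderiv ℝ ξb x (v i)) (Fin.cons (ξc x) (i.removeNth v))))
            + OmCM (n + 2) k (Fin.cons (ξa x)
              (Fin.cons (ξb x) (Fin.cons (fderiv ℝ ξc x (v i)) (i.removeNth v)))) := by
      intro i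
      have he : (fun y => iota ξc (iota ξb (iota ξa (Omega (n + 2) k))) y (i.removeNth v))
          = fun y => OmCM (n + 2) k
              (Fin.cons (ξa y) (Fin.cons (ξb y) (Fin.cons (ξc y) (i.removeNth v)))) := by
        funext y
        exact Omega_eq_OmCM (n + 2) k y _
      rw [he, fderiv_iota3 ξa ξb ξc hξa hξb hξc]
    have hR : extD (iota ξc (iota ξb (iota ξa (Omega (n + 2) k)))) x v
        = (∑ i : Fin (n + 1), (-1 : ℝ) ^ (i : ℕ) *
            OmCM (n + 2) k (Fin.cons (fderiv ℝ ξa x (v i))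
              (Fin.cons (ξb x) (Fin.cons (ξc x) (i.removeNth v)))))
          + (∑ i : Fin (n + 1), (-1 : ℝ) ^ (i : ℕ) *
            OmCM (n + 2) k (Fin.cons (ξa x)
              (Fin.cons (fderiv ℝ ξb x (v i)) (Fin.cons (ξc x) (i.removeNth v)))))
          + ∑ i : Fin (n + 1), (-1 : ℝ) ^ (i : ℕ) *
            OmCM (n + 2) k (Fin.cons (ξa x)
              (Fin.cons (ξb x) (Fin.cons (fderiv ℝ ξc x (v i)) (i.removeNth v)))) := by
      rw [show extD (iota ξc (iota ξb (iota ξa (Omega (n + 2) k)))) x v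
          = ∑ i : Fin (n + 1), (-1 : ℝ) ^ (i : ℕ) *
              fderiv ℝ (fun y => iota ξc (iota ξb (iota ξa (Omega (n + 2) k))) y
                (i.removeNth v)) x (v i)
        from rfl]
      rw [← Finset.sum_add_distrib, ← Finset.sum_add_distrib]
      refine Finset.sum_congr rfl fun i _ => ?_
      rw [hterm i]
      ring
    have hSa : ∑ i : Fin (n + 1), (-1 : ℝ) ^ (i : ℕ) *
        OmCM (n + 2) k (Fin.cons (fderiv ℝ ξa x (v i))
          (Fin.cons (ξb x) (Fin.cons (ξc x) (i.removeNth v))))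
        = OmCM (n + 2) k (Fin.cons (fderiv ℝ ξa x (ξc x)) (Fin.cons (ξb x) v))
          - OmCM (n + 2) k (Fin.cons (fderiv ℝ ξa x (ξb x)) (Fin.cons (ξc x) v)) :=
      star_cons2 a ha ξa hξa hda x (ξb x) (ξc x) v
    have hSb : ∑ i : Fin (n + 1), (-1 : ℝ) ^ (i : ℕ) *
        OmCM (n + 2) k (Fin.cons (ξa x)
          (Fin.cons (fderiv ℝ ξb x (v i)) (Fin.cons (ξc x) (i.removeNth v))))
        = OmCM (n + 2) k (Fin.cons (fderiv ℝ ξb x (ξa x)) (Fin.cons (ξc x) v))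
          - OmCM (n + 2) k (Fin.cons (fderiv ℝ ξb x (ξc x)) (Fin.cons (ξa x) v)) := by
      have hswap : ∀ i : Fin (n + 1),
          OmCM (n + 2) k (Fin.cons (ξa x)
            (Fin.cons (fderiv ℝ ξb x (v i)) (Fin.cons (ξc x) (i.removeNth v))))
            = - OmCM (n + 2) k (Fin.cons (fderiv ℝ ξb x (v i))
                (Fin.cons (ξa x) (Fin.cons (ξc x) (i.removeNth v)))) := fun i =>
        OmCM_swap01 _ _ _
      simp only [hswap, mul_neg]
      rw [Finset.sum_neg_distrib, star_cons2 b hb ξb hξb hdb x (ξa x) (ξc x) v]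
      ring
    have hSc : ∑ i : Fin (n + 1), (-1 : ℝ) ^ (i : ℕ) *
        OmCM (n + 2) k (Fin.cons (ξa x)
          (Fin.cons (ξb x) (Fin.cons (fderiv ℝ ξc x (v i)) (i.removeNth v))))
        = OmCM (n + 2) k (Fin.cons (fderiv ℝ ξc x (ξb x)) (Fin.cons (ξa x) v))
          - OmCM (n + 2) k (Fin.cons (fderiv ℝ ξc x (ξa x)) (Fin.cons (ξb x) v)) := by
      have hrot : ∀ i : Fin (n + 1),
          OmCM (n + 2) k (Fin.cons (ξa x)
            (Fin.cons (ξb x) (Fin.cons (fderiv ℝ ξc x (v i)) (i.removeNth v))))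
            = OmCM (n + 2) k (Fin.cons (fderiv ℝ ξc x (v i))
                (Fin.cons (ξa x) (Fin.cons (ξb x) (i.removeNth v)))) := by
        intro i
        rw [OmCM_swap12, OmCM_swap01, neg_neg]
      simp only [hrot]
      exact star_cons2 c hc ξc hξc hdc x (ξa x) (ξb x) v
    have hT1 : iota ξc (iota (lieB ξa ξb) (Omega (n + 2) k)) x v
        = OmCM (n + 2) k (Fin.cons (fderiv ℝ ξb x (ξa x)) (Fin.cons (ξc x) v))
          - OmCM (n + 2) k (Fin.cons (fderiv ℝ ξa x (ξb x)) (Fin.cons (ξc x) v)) := by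
      rw [show iota ξc (iota (lieB ξa ξb) (Omega (n + 2) k)) x v
          = Omega (n + 2) k x (Fin.cons (fderiv ℝ ξb x (ξa x) - fderiv ℝ ξa x (ξb x))
              (Fin.cons (ξc x) v))
        from rfl]
      rw [Omega_eq_OmCM, OmCM_cons_sub]
    have hT2 : iota ξa (iota (lieB ξb ξc) (Omega (n + 2) k)) x v
        = OmCM (n + 2) k (Fin.cons (fderiv ℝ ξc x (ξb x)) (Fin.cons (ξa x) v))
          - OmCM (n + 2) k (Fin.cons (fderiv ℝ ξb x (ξc x)) (Fin.cons (ξa x) v)) := by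
      rw [show iota ξa (iota (lieB ξb ξc) (Omega (n + 2) k)) x v
          = Omega (n + 2) k x (Fin.cons (fderiv ℝ ξc x (ξb x) - fderiv ℝ ξb x (ξc x))
              (Fin.cons (ξa x) v))
        from rfl]
      rw [Omega_eq_OmCM, OmCM_cons_sub]
    have hT3 : iota ξb (iota (lieB ξc ξa) (Omega (n + 2) k)) x v
        = OmCM (n + 2) k (Fin.cons (fderiv ℝ ξa x (ξc x)) (Fin.cons (ξb x) v))
          - OmCM (n + 2) k (Fin.cons (fderiv ℝ ξc x (ξa x)) (Fin.cons (ξb x) v)) := by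
      rw [show iota ξb (iota (lieB ξc ξa) (Omega (n + 2) k)) x v
          = Omega (n + 2) k x (Fin.cons (fderiv ℝ ξa x (ξc x) - fderiv ℝ ξc x (ξa x))
              (Fin.cons (ξb x) v))
        from rfl]
      rw [Omega_eq_OmCM, OmCM_cons_sub]
    rw [hT1, hT2, hT3, hR, hSa, hSb, hSc]
    ring


end Pataplectic

end
end

section
/- (Lemma 4) Generalized positions and momenta are 𝔭-observables: (i) every (n−1)-form Q^ζ = Σ_{μ1<…<μ_{n−1}} ζ_{μ1…μ_{n−1}}(q) dq^{μ1}∧…∧dq^{μ_{n−1}} with coefficients depending only on q belongs to 𝔓^{n−1}M, with Ξ(Q^ζ) = Σ_{μ1<…<μn} Σ_α (−1)^α (∂ζ_{μ1…μ_{α−1}μ_{α+1}…μn}/∂q^{μ_α}) ∂/∂p_{μ1…μn}; (ii) for every vector field ξ = Σ_μ ξ^μ(q) ∂/∂q^μ on X×Y, the form P_ξ := ξ⌟θ belongs to 𝔓^{n−1}M, with Ξ(P_ξ) = ξ − Σ_{μ,ν} (∂ξ^μ/∂q^ν) Π^ν_μ, where Π^ν_μ := Σ_{μ1<…<μn} Σ_α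 p_{μ1…μ_{α−1} μ μ_{α+1}…μn} δ^ν_{μ_α} ∂/∂p_{μ1…μn} is the vector field satisfying dq^ν ∧ (∂/∂q^μ ⌟ θ) = Π^ν_μ ⌟ Ω. -/
open scoped BigOperators
open MeasureTheory

noncomputable section

namespace Pataplectic

variable (n k : ℕ)

variable {n k}

variable (n k)

/- Throughout, the dimension of `X` is `n + 1`, so that "(n-1)-forms" on
`M = Λ^{n+1}T*(X×Y)` have degree `n`. -/
variable (n k : ℕ)

/-- Increasing multi-indices of length `n` valued in the coordinates of `X×Y`
(of dimension `n+1+k`): the indices of a generalized position form `Q^ζ`. -/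
abbrev IdxQ := {ρ : Fin n → Fin (n + 1 + k) // IncP ρ}

/-- A generalized position form
`Q^ζ = Σ_{μ₁<…<μₙ} ζ_{μ₁…μₙ}(q) dq^{μ₁}∧…∧dq^{μₙ}`. -/
def Qform (ζ : IdxQ n k → E (n + 1) k → ℝ) : Form (n + 1) k n :=
  fun m v => ∑ ρ : IdxQ n k,
    ζ ρ m.1 * Matrix.det (Matrix.of fun a b => (v b).1 (ρ.1 a))

/-- Removing the `α`-th entry of an increasing multi-index of length `n+1`. -/
def removeIdx (μ : Idx (n + 1) k) (α : Fin (n + 1)) : IdxQ n k :=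
  ⟨Fin.removeNth α μ.1, fun a b h => μ.2 _ _ (Fin.strictMono_succAbove α h)⟩

/-- The pataplectic vector field
`Ξ(Q^ζ) = Σ_{μ₁<…<μ_{n+1}} Σ_α (−1)^α (∂ζ_{μ₁…μ̂_α…}/∂q^{μ_α}) ∂/∂p_{μ₁…μ_{n+1}}`
(the sign is written for 1-based `α` as in the paper; below `α` is 0-based). -/
def XiQ (ζ : IdxQ n k → E (n + 1) k → ℝ) : Mfd (n + 1) k → Mfd (n + 1) k :=
  fun m => (0, fun μ : Idx (n + 1) k =>
    ∑ α : Fin (n + 1), (-1 : ℝ) ^ ((α : ℕ) + 1) *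
      fderiv ℝ (ζ (removeIdx n k μ α)) m.1 (Pi.single (μ.1 α) 1))

/-- The coordinate `p_σ` of `p` for an arbitrary (not necessarily increasing)
multi-index `σ`, via the alternating evaluation on basis vectors. -/
def pcoord (p : Psp (n + 1) k) (σ : Fin (n + 1) → Fin (n + 1 + k)) : ℝ :=
  pApply (n + 1) k p (fun a => Pi.single (σ a) 1)

/-- The vector field
`Π^ν_μ = Σ_{μ₁<…<μ_{n+1}} Σ_α p_{μ₁…μ_{α−1} μ μ_{α+1}…} δ^ν_{μ_α} ∂/∂p_{μ₁…μ_{n+1}}`. -/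
def Pi2 (ν₀ μ₀ : Fin (n + 1 + k)) : Mfd (n + 1) k → Mfd (n + 1) k :=
  fun m => (0, fun ρ : Idx (n + 1) k =>
    ∑ α : Fin (n + 1),
      if ρ.1 α = ν₀ then pcoord n k m.2 (Function.update ρ.1 α μ₀) else 0)

/-- The generalized momentum form `P_ξ = ξ ⌟ θ` for a vector field `ξ` on `X×Y`. -/
def Pform (ξ : E (n + 1) k → E (n + 1) k) : Form (n + 1) k n :=
  iota (fun m => (ξ m.1, 0)) (theta (n + 1) k)

/-- The pataplectic vector field `Ξ(P_ξ) = ξ − Σ_{μ,ν} (∂ξ^μ/∂q^ν) Π^ν_μ`. -/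
def XiP (ξ : E (n + 1) k → E (n + 1) k) : Mfd (n + 1) k → Mfd (n + 1) k :=
  fun m => ((ξ m.1, 0) : Mfd (n + 1) k)
    - ∑ μ₀ : Fin (n + 1 + k), ∑ ν₀ : Fin (n + 1 + k),
        fderiv ℝ (fun q => ξ q μ₀) m.1 (Pi.single ν₀ 1) • Pi2 n k ν₀ μ₀ m

/-- Wedge of the coordinate 1-form `dq^{ν₀}` with a `d`-form. -/
def oneWedge {d : ℕ} (ν₀ : Fin (n + 1 + k)) (β : Form (n + 1) k d) :
    Form (n + 1) k (d + 1) :=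
  fun x v => ∑ i : Fin (d + 1),
    (-1 : ℝ) ^ (i : ℕ) * (v i).1 ν₀ * β x (i.removeNth v)


section Toolkit


variable {m e : ℕ}

lemma strictMono_unique {f g : Fin m → Fin e} (hf : StrictMono f) (hg : StrictMono g)
    (h : Set.range f = Set.range g) : f = g := by
  have hc : (Finset.image f Finset.univ).card = m := by
    rw [Finset.card_image_of_injective _ hf.injective, Finset.card_univ, Fintype.card_fin]
  have hfs : ∀ x, f x ∈ Finset.image f Finset.univ :=
    fun x => Finset.mem_image_of_mem _ (Finset.mem_univ x)
  have hgs : ∀ x, g x ∈ Finset.image f Finset.univ := by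
    intro x
    obtain ⟨y, hy⟩ : g x ∈ Set.range f := h ▸ Set.mem_range_self x
    exact hy ▸ hfs y
  rw [Finset.orderEmbOfFin_unique hc hfs hf, Finset.orderEmbOfFin_unique hc hgs hg]

/-- Position at which `c` is inserted into the increasing list `ρ`. -/
def insPos (ρ : Fin m → Fin e) (c : Fin e) : Fin (m + 1) :=
  ⟨(Finset.univ.filter (fun a => ρ a < c)).card,
    Nat.lt_succ_of_le (le_trans (Finset.card_filter_le _ _) (by simp))⟩

/-- The result of inserting `c` into the increasing list `ρ`. -/
def insFun (ρ : Fin m → Fin e) (c : Fin e) : Fin (m + 1) → Fin e :=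
  (insPos ρ c).insertNth c ρ

lemma lt_insPos_iff {ρ : Fin m → Fin e} (hρ : StrictMono ρ) (c : Fin e) (a : Fin m) :
    (a : ℕ) < (insPos ρ c : ℕ) ↔ ρ a < c := by
  set s := Finset.univ.filter (fun a => ρ a < c) with hs
  show (a:ℕ) < s.card ↔ _
  constructor
  · intro h
    by_contra hc
    have hsub : s ⊆ Finset.Iio a := by
      intro b hb
      rw [hs, Finset.mem_filter] at hb
      rw [Finset.mem_Iio]
      by_contra hba
      push_neg at hba
      exact hc (lt_of_le_of_lt (hρ.monotone hba) hb.2)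
    have := Finset.card_le_card hsub
    rw [Fin.card_Iio] at this
    omega
  · intro h
    have hsub : Finset.Iic a ⊆ s := by
      intro b hb
      rw [Finset.mem_Iic] at hb
      rw [hs, Finset.mem_filter]
      exact ⟨Finset.mem_univ _, lt_of_le_of_lt (hρ.monotone hb) h⟩
    have := Finset.card_le_card hsub
    rw [Fin.card_Iic] at this
    omega

lemma insFun_pos (ρ : Fin m → Fin e) (c : Fin e) : insFun ρ c (insPos ρ c) = c :=
  Fin.insertNth_apply_same _ _ _

lemma insFun_succAbove (ρ : Fin m → Fin e) (c : Fin e) (j : Fin m) :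
    insFun ρ c ((insPos ρ c).succAbove j) = ρ j :=
  Fin.insertNth_apply_succAbove _ _ _ _

lemma removeNth_insFun (ρ : Fin m → Fin e) (c : Fin e) :
    (insPos ρ c).removeNth (insFun ρ c) = ρ :=
  Fin.removeNth_insertNth _ _ _

lemma insFun_strictMono {ρ : Fin m → Fin e} (hρ : StrictMono ρ) {c : Fin e}
    (hc : ∀ a, ρ a ≠ c) : StrictMono (insFun ρ c) := by
  set α := insPos ρ c with hα
  have key : ∀ j : Fin m, (α.succAbove j < α → ρ j < c) ∧ (α < α.succAbove j → c < ρ j) := by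
    intro j
    constructor
    · intro hj
      have hcast : j.castSucc < α := by
        by_contra hcc
        push_neg at hcc
        rw [Fin.succAbove_of_le_castSucc _ _ hcc] at hj
        exact absurd hj (not_lt.mpr (le_trans hcc (le_of_lt (Fin.castSucc_lt_succ (i := j)))))
      exact (lt_insPos_iff hρ c j).mp (by simpa [Fin.lt_def] using hcast)
    · intro hj
      have hcast : ¬ j.castSucc < α := by
        intro hcc
        rw [Fin.succAbove_of_castSucc_lt _ _ hcc] at hj
        exact absurd hj (not_lt.mpr (le_of_lt hcc))
      have hnot : ¬ (j:ℕ) < (α:ℕ) := by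
        simp only [Fin.lt_def, Fin.coe_castSucc] at hcast
        omega
      have := (lt_insPos_iff hρ c j).not.mp (by simpa [hα] using hnot)
      rcases lt_or_eq_of_le (not_lt.mp this) with h | h
      · exact h
      · exact absurd h.symm (hc j)
  intro a b hab
  rcases eq_or_ne a α with rfl | ha
  · obtain ⟨j, hj⟩ := Fin.exists_succAbove_eq (ne_of_gt hab : b ≠ α)
    rw [← hj, insFun_succAbove, insFun_pos]
    exact (key j).2 (hj ▸ hab)
  · obtain ⟨i, hi⟩ := Fin.exists_succAbove_eq ha
    rcases eq_or_ne b α with rfl | hb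
    · rw [← hi, insFun_succAbove, insFun_pos]
      exact (key i).1 (hi ▸ hab)
    · obtain ⟨j, hj⟩ := Fin.exists_succAbove_eq hb
      rw [← hi, ← hj, insFun_succAbove, insFun_succAbove]
      exact hρ (Fin.succAbove_lt_succAbove_iff.mp (by rw [hi, hj]; exact hab))

lemma range_insertNth (β : Fin (m+1)) (c : Fin e) (ρ : Fin m → Fin e) :
    Set.range (β.insertNth c ρ) = insert c (Set.range ρ) := by
  ext y
  constructor
  · rintro ⟨i, rfl⟩
    rcases eq_or_ne i β with rfl | hi
    · rw [Fin.insertNth_apply_same]; exact Set.mem_insert _ _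
    · obtain ⟨j, rfl⟩ := Fin.exists_succAbove_eq hi
      rw [Fin.insertNth_apply_succAbove]
      exact Set.mem_insert_of_mem _ ⟨j, rfl⟩
  · rintro (rfl | ⟨j, rfl⟩)
    · exact ⟨β, Fin.insertNth_apply_same _ _ _⟩
    · exact ⟨β.succAbove j, Fin.insertNth_apply_succAbove _ _ _ _⟩

/-- Uniqueness of insertion: inserting `μ α` into `α.removeNth μ` recovers `(μ, α)`. -/
lemma ins_eq_of {μ : Fin (m+1) → Fin e} (hμ : StrictMono μ) (α : Fin (m+1)) :
    insFun (α.removeNth μ) (μ α) = μ ∧ insPos (α.removeNth μ) (μ α) = α := by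
  have hρ : StrictMono (α.removeNth μ) := fun a b hab =>
    hμ (Fin.succAbove_lt_succAbove_iff.mpr hab)
  have hc : ∀ a, α.removeNth μ a ≠ μ α := fun a h =>
    Fin.succAbove_ne α a (hμ.injective h)
  have h1 : StrictMono (insFun (α.removeNth μ) (μ α)) := insFun_strictMono hρ hc
  have hr : Set.range (insFun (α.removeNth μ) (μ α)) = Set.range μ := by
    rw [insFun, range_insertNth]
    conv_rhs => rw [← Fin.insertNth_self_removeNth α μ]
    rw [range_insertNth]
  have hfe : insFun (α.removeNth μ) (μ α) = μ := strictMono_unique h1 hμ hr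
  refine ⟨hfe, ?_⟩
  have := insFun_pos (α.removeNth μ) (μ α)
  rw [hfe] at this
  exact hμ.injective this


/-! ### Determinant toolkit -/

/-- `det (v b (σ a))_{a b}`, the evaluation of `dq^{σ₁}∧…∧dq^{σ_m}` on `v`. -/
def dmat {m : ℕ} (σ : Fin m → Fin e) (v : Fin m → (Fin e → ℝ)) : ℝ :=
  Matrix.det (Matrix.of fun a b => v b (σ a))

lemma dmat_laplace {m : ℕ} (ν : Fin e) (ρ : Fin m → Fin e) (v : Fin (m+1) → (Fin e → ℝ)) :
    ∑ i : Fin (m+1), (-1:ℝ)^(i:ℕ) * v i ν * dmat ρ (i.removeNth v)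
      = dmat (Fin.cons ν ρ) v := by
  rw [dmat, Matrix.det_succ_row_zero]
  exact Finset.sum_congr rfl fun i _ => rfl

lemma dmat_cons_col {m : ℕ} (σ : Fin (m+1) → Fin e) (R : Fin m → (Fin e → ℝ))
    (u : Fin e → ℝ) :
    dmat σ (Fin.cons u R)
      = ∑ a : Fin (m+1), (-1:ℝ)^(a:ℕ) * u (σ a) * dmat (a.removeNth σ) R := by
  rw [dmat, Matrix.det_succ_column_zero]
  exact Finset.sum_congr rfl fun a _ => rfl

lemma dmat_comp_perm {m : ℕ} (σ : Fin m → Fin e) (π : Equiv.Perm (Fin m))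
    (v : Fin m → (Fin e → ℝ)) :
    dmat (σ ∘ π) v = ((Equiv.Perm.sign π : ℤ) : ℝ) * dmat σ v := by
  exact Matrix.det_permute π (Matrix.of fun a b => v b (σ a))

lemma dmat_perm_cols {m : ℕ} (σ : Fin m → Fin e) (π : Equiv.Perm (Fin m))
    (v : Fin m → (Fin e → ℝ)) :
    dmat σ (v ∘ π) = ((Equiv.Perm.sign π : ℤ) : ℝ) * dmat σ v := by
  exact Matrix.det_permute' π (Matrix.of fun a b => v b (σ a))

lemma dmat_zero_of_not_inj {m : ℕ} {σ : Fin m → Fin e} {a1 a2 : Fin m}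
    (h : σ a1 = σ a2) (hne : a1 ≠ a2) (v : Fin m → (Fin e → ℝ)) : dmat σ v = 0 :=
  Matrix.det_zero_of_row_eq hne (by funext b; simp [Matrix.of_apply, h])

lemma dmat_zero_of_col_eq {m : ℕ} (σ : Fin m → Fin e) {v : Fin m → (Fin e → ℝ)}
    {b1 b2 : Fin m} (hne : b1 ≠ b2) (h : v b1 = v b2) : dmat σ v = 0 :=
  Matrix.det_zero_of_column_eq hne (fun a => by simp [Matrix.of_apply, h])

lemma dmat_zero_of_vec_zero {m : ℕ} (σ : Fin m → Fin e) {v : Fin m → (Fin e → ℝ)}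
    {b : Fin m} (h : v b = 0) : dmat σ v = 0 :=
  Matrix.det_eq_zero_of_column_eq_zero b (fun a => by simp [Matrix.of_apply, h])

lemma cons_eq_comp_cycleRange {m : ℕ} (α : Fin (m+1)) :
    (Fin.cons α α.succAbove : Fin (m+1) → Fin (m+1)) = ⇑(α.cycleRange)⁻¹ := by
  funext i
  apply α.cycleRange.injective
  show _ = α.cycleRange (α.cycleRange.symm i)
  rw [Equiv.apply_symm_apply]
  induction i using Fin.cases with
  | zero => simpa using Fin.cycleRange_self α
  | succ j => simpa using Fin.cycleRange_succAbove α j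

lemma dmat_cons_removeNth {m : ℕ} (μ : Fin (m+1) → Fin e) (α : Fin (m+1))
    (v : Fin (m+1) → (Fin e → ℝ)) :
    dmat (Fin.cons (μ α) (α.removeNth μ)) v = (-1:ℝ)^(α:ℕ) * dmat μ v := by
  have h1 : (Fin.cons (μ α) (α.removeNth μ) : Fin (m+1) → Fin e)
      = μ ∘ ⇑(α.cycleRange)⁻¹ := by
    rw [← cons_eq_comp_cycleRange]
    funext i
    induction i using Fin.cases with
    | zero => rfl
    | succ j => rfl
  rw [h1, dmat_comp_perm]
  congr 1
  rw [Equiv.Perm.sign_inv, Fin.sign_cycleRange]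
  push_cast
  rfl



section C
variable {n k : ℕ}

lemma Idx.sm {d e : ℕ} {μ : Fin d → Fin e} (h : IncP μ) : StrictMono μ :=
  fun a b hab => h a b hab

lemma pApply_eq_dmat (p : Psp n k) (z : Fin n → E n k) :
    pApply n k p z = ∑ μ : Idx n k, p μ * dmat μ.1 z := rfl

lemma pApply_zero_of_vec_zero (p : Psp n k) {z : Fin n → E n k} {b : Fin n} (h : z b = 0) :
    pApply n k p z = 0 := by
  rw [pApply_eq_dmat]
  exact Finset.sum_eq_zero fun μ _ => by rw [dmat_zero_of_vec_zero μ.1 h, mul_zero]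

lemma pcoord_eq_zero_of_not_inj (p : Psp (n+1) k) {σ : Fin (n+1) → Fin (n+1+k)}
    {a1 a2 : Fin (n+1)} (h : σ a1 = σ a2) (hne : a1 ≠ a2) :
    pcoord n k p σ = 0 := by
  rw [pcoord, pApply_eq_dmat]
  exact Finset.sum_eq_zero fun μ _ => by
    rw [dmat_zero_of_col_eq μ.1 hne (by rw [h]), mul_zero]

lemma pcoord_comp_perm (p : Psp (n+1) k) (σ : Fin (n+1) → Fin (n+1+k))
    (π : Equiv.Perm (Fin (n+1))) :
    pcoord n k p (σ ∘ π) = ((Equiv.Perm.sign π : ℤ) : ℝ) * pcoord n k p σ := by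
  rw [pcoord, pcoord, pApply_eq_dmat, pApply_eq_dmat, Finset.mul_sum]
  refine Finset.sum_congr rfl fun μ _ => ?_
  have h1 : (fun a => (Pi.single ((σ ∘ π) a) 1 : E (n+1) k))
      = (fun a => (Pi.single (σ a) 1 : E (n+1) k)) ∘ π := rfl
  rw [h1, dmat_perm_cols]
  ring

lemma dmat_single_self (μ : Idx (n+1) k) :
    dmat μ.1 (fun a => (Pi.single (μ.1 a) 1 : E (n+1) k)) = 1 := by
  have h1 : (Matrix.of fun a b => (Pi.single (μ.1 b) (1:ℝ) : E (n+1) k) (μ.1 a))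
      = (1 : Matrix (Fin (n+1)) (Fin (n+1)) ℝ) := by
    ext a b
    by_cases hab : a = b
    · subst hab; simp [Pi.single_apply]
    · have hμ : μ.1 a ≠ μ.1 b := fun h => hab ((Idx.sm μ.2).injective h)
      simp [Pi.single_apply, Matrix.one_apply, hab, hμ]
  rw [dmat, h1, Matrix.det_one]

lemma exists_not_mem_of_ne {μ' μ : Idx (n+1) k} (hne : μ' ≠ μ) :
    ∃ a, ∀ b, μ'.1 a ≠ μ.1 b := by
  by_contra h
  push_neg at h
  have hsub : Finset.image μ'.1 Finset.univ ⊆ Finset.image μ.1 Finset.univ := by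
    intro y hy
    obtain ⟨a, _, rfl⟩ := Finset.mem_image.mp hy
    obtain ⟨b, hb⟩ := h a
    exact Finset.mem_image.mpr ⟨b, Finset.mem_univ _, hb.symm⟩
  have hcard : (Finset.image μ.1 Finset.univ).card ≤ (Finset.image μ'.1 Finset.univ).card := by
    rw [Finset.card_image_of_injective _ (Idx.sm μ.2).injective,
      Finset.card_image_of_injective _ (Idx.sm μ'.2).injective]
  have heq := Finset.eq_of_subset_of_card_le hsub hcard
  have hrange : Set.range μ'.1 = Set.range μ.1 := by
    rw [← Set.image_univ, ← Set.image_univ, ← Finset.coe_univ, ← Finset.coe_image,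
      ← Finset.coe_image, heq]
  exact hne (Subtype.ext (strictMono_unique (Idx.sm μ'.2) (Idx.sm μ.2) hrange))

lemma pcoord_incP (p : Psp (n+1) k) (μ : Idx (n+1) k) : pcoord n k p μ.1 = p μ := by
  rw [pcoord, pApply_eq_dmat]
  rw [Finset.sum_eq_single μ]
  · rw [dmat_single_self, mul_one]
  · intro μ' _ hne
    obtain ⟨a, ha⟩ := exists_not_mem_of_ne hne
    have h0 : dmat μ'.1 (fun a => (Pi.single (μ.1 a) 1 : E (n+1) k)) = 0 := by
      refine Matrix.det_eq_zero_of_row_eq_zero a (fun b => ?_)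
      simp [Matrix.of_apply, Pi.single_apply, ha b]
    rw [h0, mul_zero]
  · simp

end C

section Key
variable {n k : ℕ}

lemma cycleRange_inv_zero {m : ℕ} (a : Fin (m+1)) : (a.cycleRange)⁻¹ 0 = a := by
  rw [← cons_eq_comp_cycleRange]; rfl

lemma cycleRange_inv_succ {m : ℕ} (a : Fin (m+1)) (j : Fin m) :
    (a.cycleRange)⁻¹ j.succ = a.succAbove j := by
  rw [← cons_eq_comp_cycleRange]; rfl

/-- Insertion of a new index into an increasing multi-index. -/
def insIdx (ρ : IdxQ n k) (c : Fin (n+1+k)) (hc : ∀ a, ρ.1 a ≠ c) : Idx (n+1) k :=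
  ⟨insFun ρ.1 c, fun a b hab => (insFun_strictMono (Idx.sm ρ.2) hc) hab⟩

lemma insIdx_apply_pos (ρ : IdxQ n k) (c : Fin (n+1+k)) (hc : ∀ a, ρ.1 a ≠ c) :
    (insIdx ρ c hc).1 (insPos ρ.1 c) = c := insFun_pos _ _

lemma removeIdx_insIdx (ρ : IdxQ n k) (c : Fin (n+1+k)) (hc : ∀ a, ρ.1 a ≠ c) :
    removeIdx n k (insIdx ρ c hc) (insPos ρ.1 c) = ρ :=
  Subtype.ext (removeNth_insFun ρ.1 c)

lemma insIdx_unique (μ : Idx (n+1) k) (α : Fin (n+1)) {c : Fin (n+1+k)}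
    (hcval : μ.1 α = c) (hc : ∀ a, (removeIdx n k μ α).1 a ≠ c) :
    insIdx (removeIdx n k μ α) c hc = μ ∧ insPos (removeIdx n k μ α).1 c = α := by
  subst hcval
  obtain ⟨h1, h2⟩ := ins_eq_of (Idx.sm μ.2) α
  exact ⟨Subtype.ext h1, h2⟩

lemma removeNth_insIdx_val (ρ : IdxQ n k) (c : Fin (n+1+k)) (hc : ∀ a, ρ.1 a ≠ c) :
    (insPos ρ.1 c).removeNth (insIdx ρ c hc).1 = ρ.1 := removeNth_insFun ρ.1 c

lemma dmat_cons_insIdx (ρ : IdxQ n k) (c : Fin (n+1+k)) (hc : ∀ a, ρ.1 a ≠ c)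
    (V : Fin (n+1) → (Fin (n+1+k) → ℝ)) :
    dmat (Fin.cons c ρ.1) V
      = (-1:ℝ)^((insPos ρ.1 c : ℕ)) * dmat (insIdx ρ c hc).1 V := by
  have h := dmat_cons_removeNth ((insIdx ρ c hc).1) (insPos ρ.1 c) V
  rw [insIdx_apply_pos ρ c hc, removeNth_insIdx_val ρ c hc] at h
  exact h

lemma insIdx_congr {ρ ρ' : IdxQ n k} (h : ρ = ρ') (c : Fin (n+1+k))
    (hc : ∀ a, ρ.1 a ≠ c) (hc' : ∀ a, ρ'.1 a ≠ c) : insIdx ρ c hc = insIdx ρ' c hc' := by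
  subst h; rfl

lemma key1 (g : Fin (n+1+k) → IdxQ n k → ℝ) (V : Fin (n+1) → (Fin (n+1+k) → ℝ)) :
    (∑ ρ : IdxQ n k, ∑ ν : Fin (n+1+k), g ν ρ * dmat (Fin.cons ν ρ.1) V)
      = ∑ μ : Idx (n+1) k, ∑ α : Fin (n+1),
          (-1:ℝ)^(α:ℕ) * g (μ.1 α) (removeIdx n k μ α) * dmat μ.1 V := by
  rw [show (∑ ρ : IdxQ n k, ∑ ν : Fin (n+1+k), g ν ρ * dmat (Fin.cons ν ρ.1) V)
      = ∑ q : IdxQ n k × Fin (n+1+k), g q.2 q.1 * dmat (Fin.cons q.2 q.1.1) V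
    from Eq.symm (Fintype.sum_prod_type _)]
  rw [show (∑ μ : Idx (n+1) k, ∑ α : Fin (n+1),
        (-1:ℝ)^(α:ℕ) * g (μ.1 α) (removeIdx n k μ α) * dmat μ.1 V)
      = ∑ q : Idx (n+1) k × Fin (n+1),
        (-1:ℝ)^((q.2:ℕ)) * g (q.1.1 q.2) (removeIdx n k q.1 q.2) * dmat q.1.1 V
    from Eq.symm (Fintype.sum_prod_type _)]
  rw [← Finset.sum_filter_of_ne
    (f := fun q : IdxQ n k × Fin (n+1+k) => g q.2 q.1 * dmat (Fin.cons q.2 q.1.1) V)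
    (p := fun q => ∀ a, q.1.1 a ≠ q.2)
    (fun q _ hne a ha => hne (show g q.2 q.1 * dmat (Fin.cons q.2 q.1.1) V = 0 by
      rw [dmat_zero_of_not_inj (σ := Fin.cons q.2 q.1.1) (a1 := Fin.succ a) (a2 := 0)
        (by simp [ha]) (Fin.succ_ne_zero a) V, mul_zero]))]
  refine Finset.sum_bij'
    (i := fun q hq => (insIdx q.1 q.2 (Finset.mem_filter.mp hq).2, insPos q.1.1 q.2))
    (j := fun q _ => (removeIdx n k q.1 q.2, q.1.1 q.2))
    (fun q hq => Finset.mem_univ _)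
    (fun q _ => Finset.mem_filter.mpr ⟨Finset.mem_univ _,
      fun a h => Fin.succAbove_ne q.2 a ((Idx.sm q.1.2).injective h)⟩)
    ?_ ?_ ?_
  · intro q hq
    exact Prod.ext (removeIdx_insIdx q.1 q.2 (Finset.mem_filter.mp hq).2)
      (insIdx_apply_pos q.1 q.2 (Finset.mem_filter.mp hq).2)
  · intro q _
    obtain ⟨h1, h2⟩ := insIdx_unique q.1 q.2 rfl
      (fun a h => Fin.succAbove_ne q.2 a ((Idx.sm q.1.2).injective h))
    exact Prod.ext h1 h2
  · intro q hq
    rw [insIdx_apply_pos q.1 q.2 (Finset.mem_filter.mp hq).2,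
      removeIdx_insIdx q.1 q.2 (Finset.mem_filter.mp hq).2,
      dmat_cons_insIdx q.1 q.2 (Finset.mem_filter.mp hq).2 V]
    ring

lemma key3 (p : Psp (n+1) k) (V : Fin (n+1) → (Fin (n+1+k) → ℝ)) (ν₀ μ₀ : Fin (n+1+k)) :
    (∑ μ : Idx (n+1) k, ∑ a : Fin (n+1),
        p μ * ((-1:ℝ)^(a:ℕ) * (Pi.single μ₀ (1:ℝ) : Fin (n+1+k) → ℝ) (μ.1 a)
          * dmat (Fin.cons ν₀ (removeIdx n k μ a).1) V))
      = ∑ ρ : Idx (n+1) k, ∑ α : Fin (n+1),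
          (if ρ.1 α = ν₀ then pcoord n k p (Function.update ρ.1 α μ₀) else 0)
            * dmat ρ.1 V := by
  rw [show (∑ μ : Idx (n+1) k, ∑ a : Fin (n+1),
        p μ * ((-1:ℝ)^(a:ℕ) * (Pi.single μ₀ (1:ℝ) : Fin (n+1+k) → ℝ) (μ.1 a)
          * dmat (Fin.cons ν₀ (removeIdx n k μ a).1) V))
      = ∑ q : Idx (n+1) k × Fin (n+1),
        p q.1 * ((-1:ℝ)^((q.2:ℕ)) * (Pi.single μ₀ (1:ℝ) : Fin (n+1+k) → ℝ) (q.1.1 q.2)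
          * dmat (Fin.cons ν₀ (removeIdx n k q.1 q.2).1) V)
    from Eq.symm (Fintype.sum_prod_type _)]
  rw [show (∑ ρ : Idx (n+1) k, ∑ α : Fin (n+1),
        (if ρ.1 α = ν₀ then pcoord n k p (Function.update ρ.1 α μ₀) else 0) * dmat ρ.1 V)
      = ∑ q : Idx (n+1) k × Fin (n+1),
        (if q.1.1 q.2 = ν₀ then pcoord n k p (Function.update q.1.1 q.2 μ₀) else 0)
          * dmat q.1.1 V
    from Eq.symm (Fintype.sum_prod_type _)]
  rw [← Finset.sum_filter_of_ne
    (f := fun q : Idx (n+1) k × Fin (n+1) =>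
      p q.1 * ((-1:ℝ)^((q.2:ℕ)) * (Pi.single μ₀ (1:ℝ) : Fin (n+1+k) → ℝ) (q.1.1 q.2)
        * dmat (Fin.cons ν₀ (removeIdx n k q.1 q.2).1) V))
    (p := fun q => q.1.1 q.2 = μ₀ ∧ ∀ j, (removeIdx n k q.1 q.2).1 j ≠ ν₀)
    (fun q _ hne => by
      constructor
      · by_contra h
        refine hne (show p q.1 * ((-1:ℝ)^((q.2:ℕ))
          * (Pi.single μ₀ (1:ℝ) : Fin (n+1+k) → ℝ) (q.1.1 q.2)
          * dmat (Fin.cons ν₀ (removeIdx n k q.1 q.2).1) V) = 0 from ?_)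
        simp [Pi.single_apply, h]
      · intro j hj
        refine hne (show p q.1 * ((-1:ℝ)^((q.2:ℕ))
          * (Pi.single μ₀ (1:ℝ) : Fin (n+1+k) → ℝ) (q.1.1 q.2)
          * dmat (Fin.cons ν₀ (removeIdx n k q.1 q.2).1) V) = 0 from ?_)
        rw [dmat_zero_of_not_inj (σ := Fin.cons ν₀ (removeIdx n k q.1 q.2).1)
          (a1 := Fin.succ j) (a2 := 0) (by simp [hj]) (Fin.succ_ne_zero j) V]
        ring)]
  rw [← Finset.sum_filter_of_ne
    (f := fun q : Idx (n+1) k × Fin (n+1) =>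
      (if q.1.1 q.2 = ν₀ then pcoord n k p (Function.update q.1.1 q.2 μ₀) else 0)
        * dmat q.1.1 V)
    (p := fun q => q.1.1 q.2 = ν₀ ∧ ∀ j, (removeIdx n k q.1 q.2).1 j ≠ μ₀)
    (fun q _ hne => by
      constructor
      · by_contra h
        exact hne (show (if q.1.1 q.2 = ν₀ then pcoord n k p (Function.update q.1.1 q.2 μ₀)
          else 0) * dmat q.1.1 V = 0 by rw [if_neg h, zero_mul])
      · intro j hj
        refine hne (show (if q.1.1 q.2 = ν₀ then pcoord n k p (Function.update q.1.1 q.2 μ₀)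
          else 0) * dmat q.1.1 V = 0 from ?_)
        have hcoord : pcoord n k p (Function.update q.1.1 q.2 μ₀) = 0 := by
          refine pcoord_eq_zero_of_not_inj p
            (a1 := q.2) (a2 := q.2.succAbove j) ?_ (Fin.succAbove_ne q.2 j).symm
          rw [Function.update_self, Function.update_of_ne (Fin.succAbove_ne q.2 j)]
          exact hj.symm
        rw [hcoord]
        simp)]
  refine Finset.sum_bij'
    (i := fun q hq => (insIdx (removeIdx n k q.1 q.2) ν₀ (Finset.mem_filter.mp hq).2.2,
        insPos (removeIdx n k q.1 q.2).1 ν₀))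
    (j := fun q hq => (insIdx (removeIdx n k q.1 q.2) μ₀ (Finset.mem_filter.mp hq).2.2,
        insPos (removeIdx n k q.1 q.2).1 μ₀))
    ?_ ?_ ?_ ?_ ?_
  · -- hi
    intro q hq
    obtain ⟨-, h1, h2⟩ := Finset.mem_filter.mp hq
    refine Finset.mem_filter.mpr ⟨Finset.mem_univ _,
      insIdx_apply_pos _ _ (Finset.mem_filter.mp hq).2.2, fun j => ?_⟩
    rw [removeIdx_insIdx _ _ (Finset.mem_filter.mp hq).2.2, ← h1]
    exact fun h => Fin.succAbove_ne q.2 j ((Idx.sm q.1.2).injective h)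
  · -- hj
    intro q hq
    obtain ⟨-, h1, h2⟩ := Finset.mem_filter.mp hq
    refine Finset.mem_filter.mpr ⟨Finset.mem_univ _,
      insIdx_apply_pos _ _ (Finset.mem_filter.mp hq).2.2, fun j => ?_⟩
    rw [removeIdx_insIdx _ _ (Finset.mem_filter.mp hq).2.2, ← h1]
    exact fun h => Fin.succAbove_ne q.2 j ((Idx.sm q.1.2).injective h)
  · -- left inverse
    intro q hq
    obtain ⟨-, h1, h2⟩ := Finset.mem_filter.mp hq
    have hrm : removeIdx n k (insIdx (removeIdx n k q.1 q.2) ν₀ (Finset.mem_filter.mp hq).2.2)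
        (insPos (removeIdx n k q.1 q.2).1 ν₀) = removeIdx n k q.1 q.2 :=
      removeIdx_insIdx _ _ _
    have hc' : ∀ a, (removeIdx n k q.1 q.2).1 a ≠ μ₀ := fun a h =>
      Fin.succAbove_ne q.2 a ((Idx.sm q.1.2).injective (h.trans h1.symm))
    obtain ⟨hf, hp⟩ := insIdx_unique q.1 q.2 h1 hc'
    refine Prod.ext ?_ ?_
    · exact (insIdx_congr hrm μ₀ (fun a => by rw [hrm]; exact hc' a) hc').trans hf
    · exact (congrArg (fun r : IdxQ n k => insPos r.1 μ₀) hrm).trans hp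
  · -- right inverse
    intro q hq
    obtain ⟨-, h1, h2⟩ := Finset.mem_filter.mp hq
    have hrm : removeIdx n k (insIdx (removeIdx n k q.1 q.2) μ₀ (Finset.mem_filter.mp hq).2.2)
        (insPos (removeIdx n k q.1 q.2).1 μ₀) = removeIdx n k q.1 q.2 :=
      removeIdx_insIdx _ _ _
    have hc' : ∀ a, (removeIdx n k q.1 q.2).1 a ≠ ν₀ := fun a h =>
      Fin.succAbove_ne q.2 a ((Idx.sm q.1.2).injective (h.trans h1.symm))
    obtain ⟨hf, hp⟩ := insIdx_unique q.1 q.2 h1 hc'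
    refine Prod.ext ?_ ?_
    · exact (insIdx_congr hrm ν₀ (fun a => by rw [hrm]; exact hc' a) hc').trans hf
    · exact (congrArg (fun r : IdxQ n k => insPos r.1 ν₀) hrm).trans hp
  · -- values
    intro q hq
    obtain ⟨-, h1, h2⟩ := Finset.mem_filter.mp hq
    have hc := (Finset.mem_filter.mp hq).2.2
    set ρ' := removeIdx n k q.1 q.2 with hρ'
    set β := insPos ρ'.1 ν₀ with hβ
    set M := insIdx ρ' ν₀ hc with hM
    have hπ : Function.update M.1 β μ₀
        = q.1.1 ∘ ⇑((q.2.cycleRange)⁻¹ * β.cycleRange) := by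
      funext i
      rcases eq_or_ne i β with rfl | hi
      · rw [Function.update_self]
        simp only [Function.comp_apply, Equiv.Perm.mul_apply, Fin.cycleRange_self,
          cycleRange_inv_zero]
        exact h1.symm
      · obtain ⟨j, rfl⟩ := Fin.exists_succAbove_eq hi
        rw [Function.update_of_ne (Fin.succAbove_ne β j)]
        simp only [Function.comp_apply, Equiv.Perm.mul_apply, Fin.cycleRange_succAbove,
          cycleRange_inv_succ]
        have hMs : M.1 (β.succAbove j) = ρ'.1 j := insFun_succAbove ρ'.1 ν₀ j
        rw [hMs]
        rfl
    have hsign : ((Equiv.Perm.sign ((q.2.cycleRange)⁻¹ * β.cycleRange) : ℤ) : ℝ)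
        = (-1:ℝ)^((q.2:ℕ)) * (-1:ℝ)^((β:ℕ)) := by
      rw [Equiv.Perm.sign_mul, Equiv.Perm.sign_inv, Fin.sign_cycleRange, Fin.sign_cycleRange]
      push_cast
      ring
    have hcoord : pcoord n k p (Function.update M.1 β μ₀)
        = (-1:ℝ)^((q.2:ℕ)) * (-1:ℝ)^((β:ℕ)) * p q.1 := by
      rw [hπ, pcoord_comp_perm, hsign, pcoord_incP]
    rw [if_pos (insIdx_apply_pos ρ' ν₀ hc), hcoord, dmat_cons_insIdx ρ' ν₀ hc V, h1]
    simp only [Pi.single_eq_same]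
    rw [← hβ, ← hM]
    ring

end Key

section Analysis
variable {n k : ℕ}

lemma pi_expand_single {e' : ℕ} (u : Fin e' → ℝ) :
    u = ∑ ν : Fin e', u ν • (Pi.single ν 1 : Fin e' → ℝ) := by
  funext j
  rw [Finset.sum_apply]
  rw [Finset.sum_eq_single j]
  · simp
  · intro ν _ hν
    rw [Pi.smul_apply, Pi.single_apply, if_neg (fun h => hν h.symm), smul_zero]
  · simp

lemma clm_pi_expand {e' : ℕ} {F : Type*} [NormedAddCommGroup F] [NormedSpace ℝ F]
    (L : (Fin e' → ℝ) →L[ℝ] F) (u : Fin e' → ℝ) :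
    L u = ∑ ν : Fin e', u ν • L (Pi.single ν 1) := by
  conv_lhs => rw [pi_expand_single u]
  rw [map_sum]
  exact Finset.sum_congr rfl fun ν _ => L.map_smul _ _

/-- The continuous linear map `u ↦ dmat σ (Fin.cons u R)`. -/
def consCLM {e' m : ℕ} (σ : Fin (m+1) → Fin e') (R : Fin m → (Fin e' → ℝ)) :
    (Fin e' → ℝ) →L[ℝ] ℝ :=
  ∑ a : Fin (m+1), ((-1:ℝ)^(a:ℕ) * dmat (a.removeNth σ) R) •
    (ContinuousLinearMap.proj (σ a) : (Fin e' → ℝ) →L[ℝ] ℝ)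

lemma consCLM_apply {e' m : ℕ} (σ : Fin (m+1) → Fin e') (R : Fin m → (Fin e' → ℝ))
    (u : Fin e' → ℝ) : consCLM σ R u = dmat σ (Fin.cons u R) := by
  rw [dmat_cons_col, consCLM, ContinuousLinearMap.sum_apply]
  refine Finset.sum_congr rfl fun a _ => ?_
  rw [ContinuousLinearMap.smul_apply]
  simp [ContinuousLinearMap.proj_apply, smul_eq_mul]
  ring

lemma hasFDerivAt_pApply_snd (z : Fin n → E n k) (x : Mfd n k) :
    HasFDerivAt (fun y : Mfd n k => pApply n k y.2 z)
      (∑ μ : Idx n k, dmat μ.1 z •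
        ((ContinuousLinearMap.proj μ).comp (ContinuousLinearMap.snd ℝ (E n k) (Psp n k)))) x := by
  have h : (fun y : Mfd n k => pApply n k y.2 z)
      = fun y : Mfd n k => ∑ μ : Idx n k, y.2 μ * dmat μ.1 z := rfl
  rw [h]
  refine HasFDerivAt.fun_sum (fun μ _ => ?_)
  exact (((ContinuousLinearMap.proj μ).comp
    (ContinuousLinearMap.snd ℝ (E n k) (Psp n k))).hasFDerivAt (x := x)).mul_const _

lemma fderiv_pApply_snd (z : Fin n → E n k) (x u : Mfd n k) :
    fderiv ℝ (fun y : Mfd n k => pApply n k y.2 z) x u = pApply n k u.2 z := by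
  rw [(hasFDerivAt_pApply_snd z x).fderiv, pApply_eq_dmat]
  rw [ContinuousLinearMap.sum_apply]
  refine Finset.sum_congr rfl fun μ _ => ?_
  rw [ContinuousLinearMap.smul_apply]
  simp [smul_eq_mul, mul_comm]

lemma Omega_eval (x : Mfd n k) (v : Fin (n+1) → Mfd n k) :
    Omega n k x v = ∑ i : Fin (n+1),
      (-1:ℝ)^(i:ℕ) * pApply n k (v i).2 (fun j => ((i.removeNth v) j).1) := by
  unfold Omega extD theta
  exact Finset.sum_congr rfl fun i _ => by rw [fderiv_pApply_snd]

lemma iota_vert (Ξ : Mfd n k → Mfd n k) (hΞ : ∀ y, (Ξ y).1 = 0) (x : Mfd n k)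
    (v : Fin n → Mfd n k) :
    iota Ξ (Omega n k) x v = pApply n k ((Ξ x).2) (fun j => (v j).1) := by
  rw [iota, Omega_eval, Fin.sum_univ_succ]
  set w : Fin (n+1) → Mfd n k := Fin.cons (Ξ x) v with hw
  have h0 : (fun j => ((Fin.removeNth 0 w) j).1) = fun j => (v j).1 := by
    funext j
    show ((w ((0 : Fin (n+1)).succAbove j))).1 = _
    rw [Fin.succAbove_zero, hw, Fin.cons_succ]
  rw [h0]
  have hz : ∀ j : Fin n, (-1:ℝ)^((j.succ : Fin (n+1)) : ℕ) *
      pApply n k (w j.succ).2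
        (fun b => ((Fin.removeNth j.succ w) b).1) = 0 := by
    intro j
    haveI : NeZero n := ⟨Nat.pos_iff_ne_zero.mp j.pos⟩
    have hzz : pApply n k (w j.succ).2
        (fun b => ((Fin.removeNth j.succ w) b).1) = 0 := by
      refine pApply_zero_of_vec_zero _ (b := 0) ?_
      show (w (j.succ.succAbove 0)).1 = 0
      rw [Fin.succ_succAbove_zero, hw, Fin.cons_zero]
      exact hΞ x
    rw [hzz, mul_zero]
  rw [Finset.sum_eq_zero (fun j _ => hz j), add_zero]
  simp [hw, Fin.cons_zero]

lemma removeNth_succ_cons {m : ℕ} {β : Type*} (A : β) (v : Fin (m+1) → β) (j : Fin (m+1)) :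
    Fin.removeNth j.succ (Fin.cons A v : Fin (m+2) → β)
      = (Fin.cons A (Fin.removeNth j v) : Fin (m+1) → β) := by
  funext b
  induction b using Fin.cases with
  | zero =>
    have h : Fin.removeNth j.succ (Fin.cons A v : Fin (m+2) → β) 0
        = (Fin.cons A v : Fin (m+2) → β) (j.succ.succAbove 0) := rfl
    rw [h, Fin.succ_succAbove_zero, Fin.cons_zero, Fin.cons_zero]
  | succ b =>
    have h : Fin.removeNth j.succ (Fin.cons A v : Fin (m+2) → β) b.succ
        = (Fin.cons A v : Fin (m+2) → β) (j.succ.succAbove b.succ) := rfl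
    rw [h, Fin.succ_succAbove_succ, Fin.cons_succ, Fin.cons_succ]
    rfl

lemma cons_fst {m : ℕ} (A : Mfd (n+1) k) (w : Fin m → Mfd (n+1) k) :
    (fun j => (((Fin.cons A w : Fin (m+1) → Mfd (n+1) k)) j).1)
      = Fin.cons A.1 (fun b => (w b).1) := by
  funext j
  induction j using Fin.cases with
  | zero => rfl
  | succ b => rfl

lemma pApply_neg (p : Psp n k) (z : Fin n → E n k) :
    pApply n k (-p) z = - pApply n k p z := by
  rw [pApply_eq_dmat, pApply_eq_dmat, ← Finset.sum_neg_distrib]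
  exact Finset.sum_congr rfl fun μ _ => by simp [neg_mul]

lemma pApply_sum {ι : Type*} (s : Finset ι) (f : ι → Psp n k) (z : Fin n → E n k) :
    pApply n k (∑ t ∈ s, f t) z = ∑ t ∈ s, pApply n k (f t) z := by
  simp only [pApply_eq_dmat]
  have h : ∀ μ : Idx n k, (∑ t ∈ s, f t) μ * dmat μ.1 z = ∑ t ∈ s, f t μ * dmat μ.1 z := by
    intro μ; rw [Finset.sum_apply, Finset.sum_mul]
  rw [Finset.sum_congr rfl (fun μ _ => h μ), Finset.sum_comm]

lemma pApply_smul (c : ℝ) (p : Psp n k) (z : Fin n → E n k) :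
    pApply n k (c • p) z = c * pApply n k p z := by
  simp only [pApply_eq_dmat, Finset.mul_sum]
  refine Finset.sum_congr rfl fun μ _ => ?_
  simp [mul_assoc]

end Analysis

section Main
variable {n k : ℕ}

lemma hasFDerivAt_Qform (ζ : IdxQ n k → E (n + 1) k → ℝ) (hζ : ∀ ρ, ContDiff ℝ (⊤ : ℕ∞) (ζ ρ))
    (w : Fin n → Mfd (n+1) k) (x : Mfd (n+1) k) :
    HasFDerivAt (fun y : Mfd (n+1) k => Qform n k ζ y w)
      (∑ ρ : IdxQ n k, dmat ρ.1 (fun b => (w b).1) •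
        ((fderiv ℝ (ζ ρ) x.1).comp (ContinuousLinearMap.fst ℝ (E (n+1) k) (Psp (n+1) k)))) x := by
  have h : (fun y : Mfd (n+1) k => Qform n k ζ y w)
      = fun y => ∑ ρ : IdxQ n k, ζ ρ y.1 * dmat ρ.1 (fun b => (w b).1) := rfl
  rw [h]
  refine HasFDerivAt.fun_sum fun ρ _ => ?_
  have h2 : HasFDerivAt (fun y : Mfd (n+1) k => ζ ρ y.1)
      ((fderiv ℝ (ζ ρ) x.1).comp (ContinuousLinearMap.fst ℝ (E (n+1) k) (Psp (n+1) k))) x :=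
    (((hζ ρ).differentiable (by simp)).differentiableAt.hasFDerivAt).comp x hasFDerivAt_fst
  exact h2.mul_const _

lemma fderiv_Qform_apply (ζ : IdxQ n k → E (n + 1) k → ℝ) (hζ : ∀ ρ, ContDiff ℝ (⊤ : ℕ∞) (ζ ρ))
    (w : Fin n → Mfd (n+1) k) (x u : Mfd (n+1) k) :
    fderiv ℝ (fun y : Mfd (n+1) k => Qform n k ζ y w) x u
      = ∑ ρ : IdxQ n k, fderiv ℝ (ζ ρ) x.1 u.1 * dmat ρ.1 (fun b => (w b).1) := by
  rw [(hasFDerivAt_Qform ζ hζ w x).fderiv, ContinuousLinearMap.sum_apply]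
  refine Finset.sum_congr rfl fun ρ _ => ?_
  rw [ContinuousLinearMap.smul_apply]
  simp [smul_eq_mul, mul_comm]

/-- Part (i). -/
lemma part1 (ζ : IdxQ n k → E (n + 1) k → ℝ) (hζ : ∀ ρ, ContDiff ℝ (⊤ : ℕ∞) (ζ ρ))
    (x : Mfd (n + 1) k) (v : Fin (n + 1) → Mfd (n + 1) k) :
    extD (Qform n k ζ) x v = - iota (XiQ n k ζ) (Omega (n + 1) k) x v := by
  set V : Fin (n+1) → Fin (n+1+k) → ℝ := fun j => (v j).1 with hV
  set g : Fin (n+1+k) → IdxQ n k → ℝ :=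
    fun ν ρ => fderiv ℝ (ζ ρ) x.1 (Pi.single ν 1) with hg
  rw [iota_vert (XiQ n k ζ) (fun y => rfl) x v]
  have hR : - pApply (n+1) k ((XiQ n k ζ x).2) V
      = ∑ μ : Idx (n+1) k, ∑ α : Fin (n+1),
          (-1:ℝ)^(α:ℕ) * g (μ.1 α) (removeIdx n k μ α) * dmat μ.1 V := by
    rw [pApply_eq_dmat, ← Finset.sum_neg_distrib]
    refine Finset.sum_congr rfl fun μ _ => ?_
    show -((∑ α : Fin (n+1), (-1:ℝ)^((α:ℕ)+1) *
        fderiv ℝ (ζ (removeIdx n k μ α)) x.1 (Pi.single (μ.1 α) 1)) * dmat μ.1 V) = _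
    rw [Finset.sum_mul, ← Finset.sum_neg_distrib]
    refine Finset.sum_congr rfl fun α _ => ?_
    rw [pow_succ]
    show -((-1:ℝ)^(α:ℕ) * -1 * g (μ.1 α) (removeIdx n k μ α) * dmat μ.1 V) = _
    ring
  rw [hR, ← key1 g V]
  unfold extD
  calc ∑ i : Fin (n+1), (-1:ℝ)^(i:ℕ) *
        fderiv ℝ (fun y => Qform n k ζ y (i.removeNth v)) x (v i)
      = ∑ i : Fin (n+1), ∑ ρ : IdxQ n k, ∑ ν : Fin (n+1+k),
          g ν ρ * ((-1:ℝ)^(i:ℕ) * V i ν * dmat ρ.1 (Fin.removeNth i V)) := by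
        refine Finset.sum_congr rfl fun i _ => ?_
        rw [fderiv_Qform_apply ζ hζ _ x (v i), Finset.mul_sum]
        refine Finset.sum_congr rfl fun ρ _ => ?_
        rw [clm_pi_expand (fderiv ℝ (ζ ρ) x.1) (v i).1, Finset.sum_mul, Finset.mul_sum]
        refine Finset.sum_congr rfl fun ν _ => ?_
        show (-1:ℝ)^(i:ℕ) * (V i ν • g ν ρ * dmat ρ.1 (fun b => ((i.removeNth v) b).1)) = _
        rw [smul_eq_mul]
        ring_nf
        rfl
    _ = ∑ ρ : IdxQ n k, ∑ ν : Fin (n+1+k), g ν ρ * dmat (Fin.cons ν ρ.1) V := by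
        rw [Finset.sum_comm]
        refine Finset.sum_congr rfl fun ρ _ => ?_
        rw [Finset.sum_comm]
        refine Finset.sum_congr rfl fun ν _ => ?_
        rw [← Finset.mul_sum, ← dmat_laplace ν ρ.1 V]

/-- The core of part (iii), in coordinates. -/
lemma wedge_key (p : Psp (n+1) k) (V : Fin (n+1) → Fin (n+1+k) → ℝ)
    (ν₀ μ₀ : Fin (n+1+k)) :
    ∑ i : Fin (n+1), (-1:ℝ)^(i:ℕ) * V i ν₀ *
        pApply (n+1) k p (Fin.cons (Pi.single μ₀ 1) (Fin.removeNth i V))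
      = ∑ ρ : Idx (n+1) k, ∑ α : Fin (n+1),
          (if ρ.1 α = ν₀ then pcoord n k p (Function.update ρ.1 α μ₀) else 0)
            * dmat ρ.1 V := by
  rw [← key3 p V ν₀ μ₀]
  calc ∑ i : Fin (n+1), (-1:ℝ)^(i:ℕ) * V i ν₀ *
        pApply (n+1) k p (Fin.cons (Pi.single μ₀ 1) (Fin.removeNth i V))
      = ∑ i : Fin (n+1), ∑ μ : Idx (n+1) k, ∑ a : Fin (n+1),
          p μ * ((-1:ℝ)^(a:ℕ) * (Pi.single μ₀ (1:ℝ) : Fin (n+1+k) → ℝ) (μ.1 a))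
            * ((-1:ℝ)^(i:ℕ) * V i ν₀ * dmat (removeIdx n k μ a).1 (Fin.removeNth i V)) := by
        refine Finset.sum_congr rfl fun i _ => ?_
        rw [pApply_eq_dmat, Finset.mul_sum]
        refine Finset.sum_congr rfl fun μ _ => ?_
        rw [dmat_cons_col, Finset.mul_sum, Finset.mul_sum]
        refine Finset.sum_congr rfl fun a _ => ?_
        show (-1:ℝ)^(i:ℕ) * V i ν₀ * (p μ * ((-1:ℝ)^(a:ℕ) *
          (Pi.single μ₀ (1:ℝ) : Fin (n+1+k) → ℝ) (μ.1 a)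
            * dmat (a.removeNth μ.1) (Fin.removeNth i V))) = _
        ring_nf
        rfl
    _ = ∑ μ : Idx (n+1) k, ∑ a : Fin (n+1),
          p μ * ((-1:ℝ)^(a:ℕ) * (Pi.single μ₀ (1:ℝ) : Fin (n+1+k) → ℝ) (μ.1 a)
            * dmat (Fin.cons ν₀ (removeIdx n k μ a).1) V) := by
        rw [Finset.sum_comm]
        refine Finset.sum_congr rfl fun μ _ => ?_
        rw [Finset.sum_comm]
        refine Finset.sum_congr rfl fun a _ => ?_
        rw [← Finset.mul_sum, ← dmat_laplace ν₀ (removeIdx n k μ a).1 V]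
        ring

lemma pApply_Pi2 (ν₀ μ₀ : Fin (n+1+k)) (x : Mfd (n+1) k)
    (V : Fin (n+1) → Fin (n+1+k) → ℝ) :
    pApply (n+1) k ((Pi2 n k ν₀ μ₀ x).2) V
      = ∑ ρ : Idx (n+1) k, ∑ α : Fin (n+1),
          (if ρ.1 α = ν₀ then pcoord n k x.2 (Function.update ρ.1 α μ₀) else 0)
            * dmat ρ.1 V := by
  rw [pApply_eq_dmat]
  refine Finset.sum_congr rfl fun ρ _ => ?_
  show (∑ α : Fin (n+1), if ρ.1 α = ν₀ then pcoord n k x.2 (Function.update ρ.1 α μ₀)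
    else 0) * dmat ρ.1 V = _
  rw [Finset.sum_mul]

/-- Part (iii). -/
lemma part3 (ν₀ μ₀ : Fin (n + 1 + k)) (x : Mfd (n + 1) k)
    (v : Fin (n + 1) → Mfd (n + 1) k) :
    oneWedge n k ν₀ (iota (fun _ => ((Pi.single μ₀ 1 : E (n + 1) k), 0))
        (theta (n + 1) k)) x v
      = iota (Pi2 n k ν₀ μ₀) (Omega (n + 1) k) x v := by
  set V : Fin (n+1) → Fin (n+1+k) → ℝ := fun j => (v j).1 with hV
  rw [iota_vert (Pi2 n k ν₀ μ₀) (fun y => rfl) x v]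
  rw [pApply_Pi2 ν₀ μ₀ x V, ← wedge_key x.2 V ν₀ μ₀]
  unfold oneWedge iota theta
  refine Finset.sum_congr rfl fun i _ => ?_
  rw [cons_fst]
  rfl

/-- Derivative of the momentum-form coefficient function. -/
lemma fderiv_pApply_cons (ξ : E (n + 1) k → E (n + 1) k) (hξ : ContDiff ℝ (⊤ : ℕ∞) ξ)
    (R : Fin n → (Fin (n+1+k) → ℝ)) (x u : Mfd (n+1) k) :
    fderiv ℝ (fun y : Mfd (n+1) k => pApply (n+1) k y.2 (Fin.cons (ξ y.1) R)) x u
      = pApply (n+1) k u.2 (Fin.cons (ξ x.1) R)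
        + pApply (n+1) k x.2 (Fin.cons (fderiv ℝ ξ x.1 u.1) R) := by
  have key : HasFDerivAt (fun y : Mfd (n+1) k => pApply (n+1) k y.2 (Fin.cons (ξ y.1) R))
      (∑ μ : Idx (n+1) k,
        (x.2 μ • ((consCLM μ.1 R).comp ((fderiv ℝ ξ x.1).comp
            (ContinuousLinearMap.fst ℝ (E (n+1) k) (Psp (n+1) k))))
          + consCLM μ.1 R (ξ x.1) •
            ((ContinuousLinearMap.proj μ).comp
              (ContinuousLinearMap.snd ℝ (E (n+1) k) (Psp (n+1) k))))) x := by
    have h : (fun y : Mfd (n+1) k => pApply (n+1) k y.2 (Fin.cons (ξ y.1) R))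
        = fun y => ∑ μ : Idx (n+1) k, y.2 μ * consCLM μ.1 R (ξ y.1) := by
      funext y
      rw [pApply_eq_dmat]
      exact Finset.sum_congr rfl fun μ _ => by rw [consCLM_apply]
    rw [h]
    refine HasFDerivAt.fun_sum fun μ _ => ?_
    have h1 : HasFDerivAt (fun y : Mfd (n+1) k => y.2 μ)
        ((ContinuousLinearMap.proj μ).comp
          (ContinuousLinearMap.snd ℝ (E (n+1) k) (Psp (n+1) k))) x := by
      have hfn : ⇑((ContinuousLinearMap.proj μ).comp
          (ContinuousLinearMap.snd ℝ (E (n+1) k) (Psp (n+1) k)))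
            = fun y : Mfd (n+1) k => y.2 μ := rfl
      rw [← hfn]
      exact ContinuousLinearMap.hasFDerivAt _
    have h2 : HasFDerivAt (fun y : Mfd (n+1) k => consCLM μ.1 R (ξ y.1))
        ((consCLM μ.1 R).comp ((fderiv ℝ ξ x.1).comp
          (ContinuousLinearMap.fst ℝ (E (n+1) k) (Psp (n+1) k)))) x :=
      ((consCLM μ.1 R).hasFDerivAt).comp x
        (((hξ.differentiable (by simp)).differentiableAt.hasFDerivAt).comp x hasFDerivAt_fst)
    exact h1.mul h2
  rw [key.fderiv, ContinuousLinearMap.sum_apply]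
  rw [pApply_eq_dmat, pApply_eq_dmat, ← Finset.sum_add_distrib]
  refine Finset.sum_congr rfl fun μ _ => ?_
  rw [ContinuousLinearMap.add_apply, ContinuousLinearMap.smul_apply,
    ContinuousLinearMap.smul_apply]
  simp only [ContinuousLinearMap.comp_apply, ContinuousLinearMap.coe_fst',
    ContinuousLinearMap.coe_snd', ContinuousLinearMap.proj_apply, smul_eq_mul]
  rw [consCLM_apply, consCLM_apply]
  ring

/-- Part (ii). -/
lemma part2 (ξ : E (n + 1) k → E (n + 1) k) (hξ : ContDiff ℝ (⊤ : ℕ∞) ξ)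
    (x : Mfd (n + 1) k) (v : Fin (n + 1) → Mfd (n + 1) k) :
    extD (Pform n k ξ) x v = - iota (XiP n k ξ) (Omega (n + 1) k) x v := by
  set V : Fin (n+1) → Fin (n+1+k) → ℝ := fun j => (v j).1 with hV
  set c : Fin (n+1+k) → Fin (n+1+k) → ℝ :=
    fun μ₀ ν₀ => fderiv ℝ (fun q => ξ q μ₀) x.1 (Pi.single ν₀ 1) with hc
  -- components of XiP
  have hXi1 : (XiP n k ξ x).1 = ξ x.1 := by
    simp [XiP, Prod.fst_sub, Prod.fst_sum, Pi2]
  have hXi2 : (XiP n k ξ x).2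
      = - ∑ μ₀ : Fin (n+1+k), ∑ ν₀ : Fin (n+1+k), c μ₀ ν₀ • (Pi2 n k ν₀ μ₀ x).2 := by
    simp [XiP, Prod.snd_sub, Prod.snd_sum, hc]
  -- RHS expansion
  rw [iota]
  set w : Fin (n+2) → Mfd (n+1) k := Fin.cons (XiP n k ξ x) v with hw
  have h00 : (fun j => ((Fin.removeNth 0 w) j).1) = V := by
    funext j
    show ((w ((0 : Fin (n+2)).succAbove j))).1 = _
    rw [Fin.succAbove_zero, hw, Fin.cons_succ]
  have hsucc : ∀ j : Fin (n+1),
      (fun b => ((Fin.removeNth (Fin.succ j) w) b).1)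
        = Fin.cons (ξ x.1) (Fin.removeNth j V) := by
    intro j
    rw [hw, removeNth_succ_cons, cons_fst, hXi1]
    rfl
  have hre : ∀ j : Fin (n+1),
      pApply (n+1) k (w j.succ).2
        (fun b => ((Fin.removeNth (Fin.succ j) w) b).1)
      = pApply (n+1) k (v j).2 (Fin.cons (ξ x.1) (Fin.removeNth j V)) := by
    intro j
    rw [hsucc j, hw]
    rfl
  have hRHS : Omega (n+1) k x w
      = pApply (n+1) k ((XiP n k ξ x).2) V
        + ∑ j : Fin (n+1), (-1:ℝ)^((j:ℕ)+1) *
            pApply (n+1) k (v j).2 (Fin.cons (ξ x.1) (Fin.removeNth j V)) := by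
    rw [Omega_eval, Fin.sum_univ_succ]
    congr 1
    · show (-1:ℝ)^(((0 : Fin (n+2))):ℕ) *
        pApply (n+1) k (w 0).2 (fun j => ((Fin.removeNth 0 w) j).1) = _
      rw [h00]
      show (-1:ℝ)^(0:ℕ) * pApply (n+1) k ((XiP n k ξ x)).2 V = _
      rw [pow_zero, one_mul]
    · refine Finset.sum_congr rfl fun j _ => ?_
      rw [hre j, Fin.val_succ]
  rw [hRHS]
  -- LHS expansion
  have hPf : ∀ i : Fin (n+1), (fun y : Mfd (n+1) k => Pform n k ξ y (i.removeNth v))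
      = fun y => pApply (n+1) k y.2 (Fin.cons (ξ y.1) (Fin.removeNth i V)) := by
    intro i
    funext y
    show pApply (n+1) k y.2 (fun j => (((Fin.cons ((ξ y.1), (0 : Psp (n+1) k))
      (i.removeNth v)) : Fin (n+1) → Mfd (n+1) k) j).1) = _
    rw [cons_fst]
    rfl
  have hLHS : extD (Pform n k ξ) x v
      = (∑ i : Fin (n+1), (-1:ℝ)^(i:ℕ) *
          pApply (n+1) k (v i).2 (Fin.cons (ξ x.1) (Fin.removeNth i V)))
        + ∑ i : Fin (n+1), (-1:ℝ)^(i:ℕ) *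
            pApply (n+1) k x.2 (Fin.cons (fderiv ℝ ξ x.1 (v i).1) (Fin.removeNth i V)) := by
    unfold extD
    rw [← Finset.sum_add_distrib]
    refine Finset.sum_congr rfl fun i _ => ?_
    rw [hPf i, fderiv_pApply_cons ξ hξ (Fin.removeNth i V) x (v i)]
    ring
  rw [hLHS]
  -- match the two halves
  have hB : ∑ i : Fin (n+1), (-1:ℝ)^(i:ℕ) *
      pApply (n+1) k x.2 (Fin.cons (fderiv ℝ ξ x.1 (v i).1) (Fin.removeNth i V))
      = - pApply (n+1) k ((XiP n k ξ x).2) V := by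
    rw [hXi2, pApply_neg, neg_neg, pApply_sum]
    rw [Finset.sum_congr rfl (fun μ₀ _ => pApply_sum Finset.univ _ V)]
    rw [Finset.sum_congr rfl (fun μ₀ _ => Finset.sum_congr rfl
      (fun ν₀ _ => pApply_smul (c μ₀ ν₀) _ V))]
    -- expand the derivative direction
    have hdir : ∀ i : Fin (n+1),
        pApply (n+1) k x.2 (Fin.cons (fderiv ℝ ξ x.1 (v i).1) (Fin.removeNth i V))
          = ∑ ν₀ : Fin (n+1+k), ∑ μ₀ : Fin (n+1+k), V i ν₀ * c μ₀ ν₀ *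
              pApply (n+1) k x.2 (Fin.cons (Pi.single μ₀ 1) (Fin.removeNth i V)) := by
      intro i
      have hPC : ∀ u : E (n+1) k, pApply (n+1) k x.2 (Fin.cons u (Fin.removeNth i V))
          = (∑ μ : Idx (n+1) k, x.2 μ • consCLM μ.1 (Fin.removeNth i V)) u := by
        intro u
        rw [pApply_eq_dmat, ContinuousLinearMap.sum_apply]
        exact Finset.sum_congr rfl fun μ _ => by
          rw [ContinuousLinearMap.smul_apply, smul_eq_mul, consCLM_apply]
      set PC := ∑ μ : Idx (n+1) k, x.2 μ • consCLM μ.1 (Fin.removeNth i V) with hPCdef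
      rw [hPC]
      have h1 : (fderiv ℝ ξ x.1) (v i).1
          = ∑ ν₀ : Fin (n+1+k), V i ν₀ • (fderiv ℝ ξ x.1 (Pi.single ν₀ 1)) :=
        clm_pi_expand (fderiv ℝ ξ x.1) (v i).1
      rw [h1, map_sum]
      refine Finset.sum_congr rfl fun ν₀ _ => ?_
      rw [PC.map_smul]
      have h2 : fderiv ℝ ξ x.1 (Pi.single ν₀ 1)
          = ∑ μ₀ : Fin (n+1+k), c μ₀ ν₀ • (Pi.single μ₀ 1 : E (n+1) k) := by
        rw [pi_expand_single (fderiv ℝ ξ x.1 (Pi.single ν₀ 1))]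
        refine Finset.sum_congr rfl fun μ₀ _ => ?_
        congr 1
        show (fderiv ℝ ξ x.1) (Pi.single ν₀ 1) μ₀
          = fderiv ℝ (fun q => ξ q μ₀) x.1 (Pi.single ν₀ 1)
        have hco : HasFDerivAt (fun q => ξ q μ₀)
            ((ContinuousLinearMap.proj μ₀ : (E (n+1) k) →L[ℝ] ℝ).comp (fderiv ℝ ξ x.1)) x.1 :=
          ((ContinuousLinearMap.proj μ₀ :
            (E (n+1) k) →L[ℝ] ℝ).hasFDerivAt).comp x.1
            ((hξ.differentiable (by simp)).differentiableAt.hasFDerivAt)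
        rw [hco.fderiv]
        rfl
      rw [h2, map_sum, Finset.smul_sum]
      refine Finset.sum_congr rfl fun μ₀ _ => ?_
      rw [PC.map_smul, ← hPC (Pi.single μ₀ 1), smul_smul, smul_eq_mul]
    calc ∑ i : Fin (n+1), (-1:ℝ)^(i:ℕ) *
          pApply (n+1) k x.2 (Fin.cons (fderiv ℝ ξ x.1 (v i).1) (Fin.removeNth i V))
        = ∑ i : Fin (n+1), ∑ ν₀ : Fin (n+1+k), ∑ μ₀ : Fin (n+1+k),
            c μ₀ ν₀ * ((-1:ℝ)^(i:ℕ) * V i ν₀ *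
              pApply (n+1) k x.2 (Fin.cons (Pi.single μ₀ 1) (Fin.removeNth i V))) := by
          refine Finset.sum_congr rfl fun i _ => ?_
          rw [hdir i, Finset.mul_sum]
          refine Finset.sum_congr rfl fun ν₀ _ => ?_
          rw [Finset.mul_sum]
          refine Finset.sum_congr rfl fun μ₀ _ => ?_
          ring
      _ = ∑ ν₀ : Fin (n+1+k), ∑ μ₀ : Fin (n+1+k), ∑ i : Fin (n+1),
            c μ₀ ν₀ * ((-1:ℝ)^(i:ℕ) * V i ν₀ *
              pApply (n+1) k x.2 (Fin.cons (Pi.single μ₀ 1) (Fin.removeNth i V))) := by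
          rw [Finset.sum_comm]
          exact Finset.sum_congr rfl fun ν₀ _ => Finset.sum_comm
      _ = ∑ μ₀ : Fin (n+1+k), ∑ ν₀ : Fin (n+1+k),
            c μ₀ ν₀ * pApply (n+1) k ((Pi2 n k ν₀ μ₀ x).2) V := by
          rw [Finset.sum_comm]
          refine Finset.sum_congr rfl fun μ₀ _ => Finset.sum_congr rfl fun ν₀ _ => ?_
          rw [← Finset.mul_sum]
          congr 1
          rw [pApply_Pi2 ν₀ μ₀ x V, ← wedge_key x.2 V ν₀ μ₀]
  rw [hB]
  have hA : (∑ j : Fin (n+1), (-1:ℝ)^((j:ℕ)+1) *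
      pApply (n+1) k (v j).2 (Fin.cons (ξ x.1) (Fin.removeNth j V)))
      = - ∑ j : Fin (n+1), (-1:ℝ)^((j:ℕ)) *
          pApply (n+1) k (v j).2 (Fin.cons (ξ x.1) (Fin.removeNth j V)) := by
    rw [← Finset.sum_neg_distrib]
    refine Finset.sum_congr rfl fun j _ => ?_
    rw [pow_succ]
    ring
  rw [hA]
  ring

end Main

end Toolkit

/-- (Lemma 4.) Generalized positions and momenta are 𝔭-observables:
`Q^ζ ∈ 𝔓^{n-1}M` with `Ξ(Q^ζ)` as above, `P_ξ = ξ⌟θ ∈ 𝔓^{n-1}M` with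
`Ξ(P_ξ) = ξ − Σ_{μ,ν} (∂ξ^μ/∂q^ν) Π^ν_μ`, where `Π^ν_μ` satisfies
`dq^ν ∧ (∂/∂q^μ ⌟ θ) = Π^ν_μ ⌟ Ω`. -/
theorem generalized_positions_and_momenta_are_observables
    (n k : ℕ)
    (ζ : IdxQ n k → E (n + 1) k → ℝ) (hζ : ∀ ρ, ContDiff ℝ (⊤ : ℕ∞) (ζ ρ))
    (ξ : E (n + 1) k → E (n + 1) k) (hξ : ContDiff ℝ (⊤ : ℕ∞) ξ) :
    -- (i) `d Q^ζ = − Ξ(Q^ζ) ⌟ Ω`: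
    (∀ (x : Mfd (n + 1) k) (v : Fin (n + 1) → Mfd (n + 1) k),
      extD (Qform n k ζ) x v = - iota (XiQ n k ζ) (Omega (n + 1) k) x v)
    ∧
    -- (ii) `d P_ξ = − Ξ(P_ξ) ⌟ Ω`:
    (∀ (x : Mfd (n + 1) k) (v : Fin (n + 1) → Mfd (n + 1) k),
      extD (Pform n k ξ) x v = - iota (XiP n k ξ) (Omega (n + 1) k) x v)
    ∧
    -- `dq^ν ∧ (∂/∂q^μ ⌟ θ) = Π^ν_μ ⌟ Ω`:
    (∀ (ν₀ μ₀ : Fin (n + 1 + k)) (x : Mfd (n + 1) k)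
        (v : Fin (n + 1) → Mfd (n + 1) k),
      oneWedge n k ν₀ (iota (fun _ => ((Pi.single μ₀ 1 : E (n + 1) k), 0))
          (theta (n + 1) k)) x v
        = iota (Pi2 n k ν₀ μ₀) (Omega (n + 1) k) x v) :=
  ⟨fun x v => part1 ζ hζ x v, fun x v => part2 ξ hξ x v,
    fun ν₀ μ₀ x v => part3 ν₀ μ₀ x v⟩

end Pataplectic

end
end
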